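/- arXiv:2208.07152 — 11 statements merged into one kernel-verified Lean document; each statement's English description precedes it below -/
import Mathlib

section
/- Let X be a compact Hausdorff space and let μ : C(X,[0,1]) → [0,1] be a functional that is both ∨-homogeneous (μ(c ∨ φ) = c ∨ μ(φ) for all c ∈ [0,1], φ ∈ C(X,[0,1])) and ∧-homogeneous (μ(c ∧ φ) = c ∧ μ(φ) for all c ∈ [0,1], φ ∈ C(X,[0,1])). Then μ is monotone: for all φ, ψ ∈ C(X,[0,1]) with ψ ≤ φ pointwise, μ(ψ) ≤ μ(φ). -/
open unitInterval

noncomputable section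

/-- Two `[0,1]`-valued functions are comonotone. -/
def Comonotone {X : Type*} (f g : X → I) : Prop :=
  ∀ x y : X, 0 ≤ ((f x : ℝ) - (f y : ℝ)) * ((g x : ℝ) - (g y : ℝ))
/-- Pointwise max of a constant with a continuous `[0,1]`-valued map. -/
def cSup {X : Type*} [TopologicalSpace X] (c : I) (f : C(X, I)) : C(X, I) :=
  ⟨fun x => c ⊔ f x, continuous_const.max f.continuous⟩

/-- Pointwise min of a constant with a continuous `[0,1]`-valued map. -/
def cInf {X : Type*} [TopologicalSpace X] (c : I) (f : C(X, I)) : C(X, I) :=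
  ⟨fun x => c ⊓ f x, continuous_const.min f.continuous⟩

/-- Pointwise product of a constant with a continuous `[0,1]`-valued map. -/
def cMul {X : Type*} [TopologicalSpace X] (c : I) (f : C(X, I)) : C(X, I) :=
  ⟨fun x => c * f x,
    Continuous.subtype_mk (continuous_const.mul (continuous_subtype_val.comp f.continuous)) _⟩

/-- Pointwise max of two continuous `[0,1]`-valued maps. -/
def fSup {X : Type*} [TopologicalSpace X] (f g : C(X, I)) : C(X, I) :=
  ⟨fun x => f x ⊔ g x, f.continuous.max g.continuous⟩

/-- A `∨`-homogeneous and `∧`-homogeneous functional on `C(X,[0,1])` is monotone. -/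
theorem sup_inf_homogeneous_is_monotone {X : Type*} [TopologicalSpace X] [CompactSpace X]
    [T2Space X] (μ : C(X, I) → I)
    (hsup : ∀ (c : I) (φ : C(X, I)), μ (cSup c φ) = c ⊔ μ φ)
    (hinf : ∀ (c : I) (φ : C(X, I)), μ (cInf c φ) = c ⊓ μ φ) :
    ∀ φ ψ : C(X, I), (∀ x, ψ x ≤ φ x) → μ ψ ≤ μ φ := by
  intro φ ψ h
  by_contra hlt
  push_neg at hlt
  obtain ⟨b, hsb, hbt⟩ := exists_between hlt
  set g : C(X, I) := fSup ψ (cInf b φ) with hg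
  have h1 : cInf b g = cInf b φ := by
    refine ContinuousMap.ext fun x => ?_
    show b ⊓ (ψ x ⊔ b ⊓ φ x) = b ⊓ φ x
    rw [inf_sup_left, ← inf_assoc, inf_idem]
    exact sup_eq_right.2 (inf_le_inf_left b (h x))
  have h2 : cSup b g = cSup b ψ := by
    refine ContinuousMap.ext fun x => ?_
    show b ⊔ (ψ x ⊔ b ⊓ φ x) = b ⊔ ψ x
    rw [← sup_assoc]
    exact sup_eq_left.2 (le_trans inf_le_left le_sup_left)
  have e1 : b ⊓ μ g = b ⊓ μ φ := by rw [← hinf b g, h1, hinf]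
  have e2 : b ⊔ μ g = b ⊔ μ ψ := by rw [← hsup b g, h2, hsup]
  rw [inf_eq_right.2 hsb.le] at e1
  rw [sup_eq_right.2 hbt.le] at e2
  rcases le_total (μ g) b with hle | hge
  · rw [sup_eq_left.2 hle] at e2
    exact absurd e2 hbt.ne
  · rw [inf_eq_left.2 hge] at e1
    exact absurd e1 (hsb.ne')
end
end

section
/- Let X be a finite set with n elements and let μ : [0,1]^n → [0,1] (functions X → [0,1]) be comonotonically maxitive, i.e. μ(φ ∨ ψ) = μ(φ) ∨ μ(ψ) for every pair of comonotone functions φ, ψ : X → [0,1]. Then μ is monotone: ψ ≤ φ pointwise implies μ(ψ) ≤ μ(φ). -/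
open unitInterval

noncomputable section

lemma coe_sup' (a b : I) : ((a ⊔ b : I) : ℝ) = max (a:ℝ) (b:ℝ) := by
  rcases le_total a b <;> simp_all [sup_eq_right.2, sup_eq_left.2, max_eq_right, max_eq_left]

lemma coe_inf' (a b : I) : ((a ⊓ b : I) : ℝ) = min (a:ℝ) (b:ℝ) := by
  rcases le_total a b <;> simp_all [inf_eq_left.2, inf_eq_right.2, min_eq_left, min_eq_right]

lemma key_real (a b c d s t : ℝ) (hab : a ≤ b) (hst : s < t)
    (hb : s < b → t ≤ b) (hd : s < d → t ≤ d)
    (h : max a (min b t) < max c (min d t)) : max a (min b s) ≤ max c (min d s) := by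
  rcases le_or_gt d s with h1 | h1
  · rw [min_eq_left (h1.trans hst.le), min_eq_left h1] at *
    calc max a (min b s) ≤ max a (min b t) := max_le_max le_rfl (min_le_min le_rfl hst.le)
      _ ≤ max c d := h.le
  · have hdt := hd h1
    rw [min_eq_right hdt, min_eq_right h1.le] at *
    rcases le_or_gt b s with h2 | h2
    · rw [min_eq_left (h2.trans hst.le), min_eq_left h2] at *
      have : max a b ≤ s := max_le (hab.trans h2) h2
      exact this.trans (le_max_right c s)
    · have hbt := hb h2
      rw [min_eq_right hbt, min_eq_right h2.le] at *
      have hct : t < c := by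
        rcases le_or_gt c t with h3 | h3
        · rw [max_eq_right h3] at h; exact absurd h (not_lt.2 (le_max_right a t))
        · exact h3
      have hac : a < c := by
        have := le_max_left a t
        linarith [h.trans_le (max_le le_rfl hct.le)]
      exact (max_le hac.le (by linarith)).trans (le_max_left c s)

/-- On a finite set, a comonotonically maxitive functional is monotone. -/
theorem comonotone_maxitive_is_monotone_finite {X : Type*} [Fintype X]
    (μ : (X → I) → I)
    (hmax : ∀ φ ψ : X → I, Comonotone φ ψ → μ (fun x => φ x ⊔ ψ x) = μ φ ⊔ μ ψ) :
    ∀ φ ψ : X → I, (∀ x, ψ x ≤ φ x) → μ ψ ≤ μ φ := by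
  intro φ ψ hle
  -- the interpolating family
  set h : I → (X → I) := fun s x => ψ x ⊔ (φ x ⊓ s) with hh
  have main : ∀ n : ℕ, ∀ s : I,
      (Finset.univ.filter (fun x => s < φ x)).card ≤ n → μ (h s) ≤ μ φ := by
    intro n
    induction n with
    | zero =>
      intro s hs
      have hc0 : (Finset.univ.filter (fun x => s < φ x)).card = 0 := Nat.le_zero.mp hs
      have hempty : ∀ x, φ x ≤ s := by
        intro x
        by_contra hx
        have hx' : x ∈ Finset.univ.filter (fun x => s < φ x) := by
          simp [lt_of_not_ge hx]
        rw [Finset.card_eq_zero] at hc0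
        simp [hc0] at hx' 
      have : h s = φ := by
        funext x
        simp only [hh]
        rw [inf_eq_left.2 (hempty x), sup_eq_right.2 (hle x)]
      rw [this]
    | succ n ih =>
      intro s hs
      rcases Nat.eq_zero_or_pos (Finset.univ.filter (fun x => s < φ x)).card with h0 | h0
      · -- same as base case
        have hempty : ∀ x, φ x ≤ s := by
          intro x
          by_contra hx
          have hx' : x ∈ Finset.univ.filter (fun x => s < φ x) := by
            simp [lt_of_not_ge hx]
          rw [Finset.card_eq_zero] at h0
          simp [h0] at hx'
        have : h s = φ := by
          funext x
          simp only [hh]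
          rw [inf_eq_left.2 (hempty x), sup_eq_right.2 (hle x)]
        rw [this]
      · -- nonempty: take the smallest value of φ above s
        have hne : (Finset.univ.filter (fun x => s < φ x)).Nonempty :=
          Finset.card_pos.mp h0
        obtain ⟨x0, hx0mem, hx0min⟩ :=
          Finset.exists_min_image (Finset.univ.filter (fun x => s < φ x)) φ hne
        set t : I := φ x0 with ht
        have hst : s < t := (Finset.mem_filter.mp hx0mem).2
        have hmin : ∀ x, s < φ x → t ≤ φ x := by
          intro x hx
          exact hx0min x (Finset.mem_filter.mpr ⟨Finset.mem_univ x, hx⟩)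
        -- comonotonicity of h s and h t
        have hkey : ∀ x y : X, ((h t x : ℝ)) < h t y → ((h s x : ℝ)) ≤ h s y := by
          intro x y hxy
          simp only [hh, coe_sup', coe_inf'] at *
          exact key_real _ _ _ _ _ _ (hle x) hst
            (fun hb => hmin x hb) (fun hd => hmin y hd) hxy
        have hcom : Comonotone (h s) (h t) := by
          intro x y
          rcases lt_trichotomy ((h t x : ℝ)) (h t y) with hc | hc | hc
          · have := hkey x y hc
            nlinarith
          · rw [hc]; ring_nf; simp
          · have := hkey y x hc
            nlinarith
        have hsup : (fun x => h s x ⊔ h t x) = h t := by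
          funext x
          simp only [hh]
          rw [sup_eq_right.2]
          exact sup_le_sup le_rfl (inf_le_inf le_rfl hst.le)
        have hle' : μ (h s) ≤ μ (h t) := by
          have := hmax (h s) (h t) hcom
          rw [hsup] at this
          rw [this]
          exact le_sup_left
        -- apply IH at t
        have hsub : Finset.univ.filter (fun x => t < φ x) ⊂
            Finset.univ.filter (fun x => s < φ x) := by
          constructor
          · intro x hx
            rw [Finset.mem_filter] at *
            exact ⟨hx.1, hst.trans hx.2⟩
          · intro hcon
            have hx2 := hcon hx0mem
            rw [Finset.mem_filter] at hx2
            exact absurd hx2.2 (lt_irrefl t)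
        have hcard : (Finset.univ.filter (fun x => t < φ x)).card ≤ n := by
          have := Finset.card_lt_card hsub
          omega
        exact hle'.trans (ih t hcard)
  have h0 : h 0 = ψ := by
    funext x
    simp only [hh]
    rw [inf_eq_right.2 unitInterval.nonneg', sup_eq_left.2 unitInterval.nonneg']
  have := main (Fintype.card X) 0 (by
    exact (Finset.card_filter_le _ _).trans (by simp))
  rwa [h0] at this
end
end

section
/- Let X be a compact Hausdorff space, A a subset of C(X,[0,1]) containing all constant functions and closed under the operations ψ ↦ c ∨ ψ and ψ ↦ c·ψ for every c ∈ [0,1] (a (∨,·)-subspace), and let μ : A → [0,1] be monotone, ·-homogeneous (μ(c·ψ) = c·μ(ψ)), and ∨-homogeneous (μ(c ∨ ψ) = c ∨ μ(ψ)). Then for every fixed φ ∈ C(X,[0,1]), setting A' = A ∪ {d ∨ (c·φ) : c, d ∈ [0,1]}, there exists a monotone, ·-homogeneous, ∨-homogeneous functional μ' : A' → [0,1] extending μ. -/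
/-!
For every `g ∈ C(X,[0,1])` put `ν g = inf {c⁻¹ μ(ψ) : c ∈ (0,1], ψ ∈ A, ψ ≥ c·g}`; for `g = φ` this
is the extension value `a`. Rescaling the admissible pairs `(c, ψ)` shows that `ν` is monotone and
`·`-homogeneous, and monotonicity and homogeneity of `μ` give `ν = μ` on `A`. Since
`(c·d) ∨ ψ ≥ c·(d ∨ g)` whenever `ψ ≥ c·g`, also `ν (d ∨ g) = d ∨ ν g`. Thus `ν` extends `μ` to all
of `C(X,[0,1])`, in particular to `A ∪ {d ∨ (c·φ)}`.
-/

open unitInterval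

noncomputable section

/-- A `(∨,·)`-subspace of `C(X,[0,1])`: contains all constants and is closed
under `ψ ↦ c ∨ ψ` and `ψ ↦ c·ψ`. -/
def IsVMulSubspace {X : Type*} [TopologicalSpace X] (A : Set C(X, I)) : Prop :=
  (∀ c : I, ContinuousMap.const X c ∈ A) ∧
  ∀ (c : I), ∀ ψ ∈ A, cSup c ψ ∈ A ∧ cMul c ψ ∈ A

section

variable {X : Type*} [TopologicalSpace X]

lemma cMul_zero (f : C(X, I)) : cMul 0 f = ContinuousMap.const X 0 :=
  ContinuousMap.ext fun _ => zero_mul _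

lemma cSup_const_zero (c : I) : cSup c (ContinuousMap.const X 0) = ContinuousMap.const X c :=
  ContinuousMap.ext fun _ => sup_of_le_left nonneg'

variable {A : Set C(X, I)} {μ : C(X, I) → I}

lemma apply_const_of_homogeneous (hA : IsVMulSubspace A)
    (hmul : ∀ (c : I), ∀ ψ ∈ A, μ (cMul c ψ) = c * μ ψ)
    (hsup : ∀ (c : I), ∀ ψ ∈ A, μ (cSup c ψ) = c ⊔ μ ψ) (c : I) :
    μ (ContinuousMap.const X c) = c := by
  have h0 : μ (ContinuousMap.const X 0) = 0 := by
    simpa [cMul_zero] using hmul 0 _ (hA.1 0)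
  rw [← cSup_const_zero, hsup c _ (hA.1 0), h0, sup_of_le_left nonneg']

variable (A μ) in
def upperQuotients (g : C(X, I)) : Set ℝ :=
  {r | ∃ c : I, 0 < c ∧ ∃ ψ ∈ A, (∀ x, c * g x ≤ ψ x) ∧ r = μ ψ / c}

variable (A μ) in
def upperExtension (g : C(X, I)) : ℝ :=
  sInf (upperQuotients A μ g)

variable {g : C(X, I)}

lemma upperQuotients_nonempty (hA : IsVMulSubspace A) : (upperQuotients A μ g).Nonempty :=
  ⟨_, 1, one_pos, _, hA.1 1, fun x => (one_mul (g x)).trans_le le_one', rfl⟩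

lemma upperQuotients_bddBelow : BddBelow (upperQuotients A μ g) :=
  ⟨0, by rintro _ ⟨c, -, ψ, -, -, rfl⟩; exact div_nonneg nonneg' nonneg'⟩

lemma upperExtension_le {c : I} (hc : 0 < c) {ψ : C(X, I)} (hψ : ψ ∈ A)
    (h : ∀ x, c * g x ≤ ψ x) : upperExtension A μ g ≤ μ ψ / c :=
  csInf_le upperQuotients_bddBelow ⟨c, hc, ψ, hψ, h, rfl⟩

lemma le_map_upperExtension (hA : IsVMulSubspace A) {f : ℝ → ℝ} (hf : Monotone f)
    (hfc : Continuous f) {y : ℝ}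
    (h : ∀ c : I, 0 < c → ∀ ψ ∈ A, (∀ x, c * g x ≤ ψ x) → y ≤ f (μ ψ / c)) :
    y ≤ f (upperExtension A μ g) := by
  rw [upperExtension, hf.map_csInf_of_continuousAt hfc.continuousAt (upperQuotients_nonempty hA)
    upperQuotients_bddBelow]
  refine le_csInf ((upperQuotients_nonempty hA).image f) ?_
  rintro _ ⟨_, ⟨c, hc, ψ, hψ, hcψ, rfl⟩, rfl⟩
  exact h c hc ψ hψ hcψ

lemma le_upperExtension (hA : IsVMulSubspace A) {y : ℝ}
    (h : ∀ c : I, 0 < c → ∀ ψ ∈ A, (∀ x, c * g x ≤ ψ x) → y ≤ μ ψ / c) :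
    y ≤ upperExtension A μ g :=
  le_map_upperExtension hA monotone_id continuous_id h

lemma upperExtension_mem (hA : IsVMulSubspace A) (g : C(X, I)) : upperExtension A μ g ∈ I :=
  ⟨Real.sInf_nonneg fun _ ⟨_, _, _, _, _, hr⟩ => hr ▸ div_nonneg nonneg' nonneg',
    (upperExtension_le one_pos (hA.1 1) fun x => (one_mul (g x)).trans_le le_one').trans
      (by simpa using (μ (ContinuousMap.const X 1)).2.2)⟩

lemma upperExtension_mono (hA : IsVMulSubspace A) {h : C(X, I)} (hgh : ∀ x, g x ≤ h x) :
    upperExtension A μ g ≤ upperExtension A μ h :=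
  le_upperExtension hA fun _c hc _ψ hψ hcψ =>
    upperExtension_le hc hψ fun x => (mul_le_mul_right (hgh x) _).trans (hcψ x)

lemma upperExtension_eq_of_mem (hA : IsVMulSubspace A)
    (hmono : ∀ ψ ∈ A, ∀ χ ∈ A, (∀ x, ψ x ≤ χ x) → μ ψ ≤ μ χ)
    (hmul : ∀ (c : I), ∀ ψ ∈ A, μ (cMul c ψ) = c * μ ψ) {ψ : C(X, I)} (hψ : ψ ∈ A) :
    upperExtension A μ ψ = μ ψ := by
  refine le_antisymm ?_ (le_upperExtension hA fun c hc χ hχ hcψ => ?_)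
  · simpa using upperExtension_le one_pos hψ fun x => (one_mul (ψ x)).le
  · have : c * μ ψ ≤ μ χ := hmul c ψ hψ ▸ hmono _ (hA.2 c ψ hψ).2 χ hχ hcψ
    rw [le_div_iff₀ (coe_pos.2 hc), mul_comm]
    exact_mod_cast this

lemma upperExtension_cMul (hA : IsVMulSubspace A)
    (hmul : ∀ (c : I), ∀ ψ ∈ A, μ (cMul c ψ) = c * μ ψ) (c : I) (g : C(X, I)) :
    upperExtension A μ (cMul c g) = c * upperExtension A μ g := by
  refine le_antisymm (le_map_upperExtension hA (monotone_mul_left_of_nonneg nonneg')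
    (continuous_const_mul _) fun c' hc' ψ hψ hc'ψ => ?_) ?_
  · have hle := upperExtension_le (μ := μ) (g := cMul c g) hc' (hA.2 c ψ hψ).2
      fun x => (mul_left_comm c' c (g x)).trans_le (mul_le_mul_right (hc'ψ x) c)
    rwa [hmul c ψ hψ, Set.Icc.coe_mul, mul_div_assoc] at hle
  rcases (nonneg' : 0 ≤ c).eq_or_lt with rfl | hc
  · simpa using (upperExtension_mem hA _).1
  refine le_upperExtension hA fun c' hc' ψ hψ hc'ψ => ?_
  have hle := upperExtension_le (μ := μ) (g := g) (mul_pos hc' hc) hψ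
    fun x => (mul_assoc c' c (g x)).trans_le (hc'ψ x)
  calc (c : ℝ) * upperExtension A μ g ≤ c * (μ ψ / (c' * c : I)) :=
        mul_le_mul_of_nonneg_left hle nonneg'
    _ = μ ψ / c' := by
        rw [Set.Icc.coe_mul]
        field_simp [(coe_pos.2 hc).ne']

lemma upperExtension_cSup (hA : IsVMulSubspace A)
    (hmono : ∀ ψ ∈ A, ∀ χ ∈ A, (∀ x, ψ x ≤ χ x) → μ ψ ≤ μ χ)
    (hmul : ∀ (c : I), ∀ ψ ∈ A, μ (cMul c ψ) = c * μ ψ)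
    (hsup : ∀ (c : I), ∀ ψ ∈ A, μ (cSup c ψ) = c ⊔ μ ψ) (d : I) (g : C(X, I)) :
    upperExtension A μ (cSup d g) = max (d : ℝ) (upperExtension A μ g) := by
  refine le_antisymm (le_map_upperExtension hA (fun _ _ h => max_le_max_left _ h)
    (continuous_const.max continuous_id) fun c hc ψ hψ hcψ => ?_) (max_le ?_ ?_)
  · have hle := upperExtension_le (μ := μ) (g := cSup d g) hc (hA.2 (c * d) ψ hψ).1
      fun x => (mul_max c d (g x)).trans_le (sup_le_sup_left (hcψ x) _)
    rwa [hsup _ ψ hψ, Set.Icc.coe_sup, Set.Icc.coe_mul, ← max_div_div_right nonneg',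
      mul_div_cancel_left₀ _ (coe_pos.2 hc).ne'] at hle
  · refine le_upperExtension hA fun c hc ψ hψ hcψ => ?_
    have : c * d ≤ μ ψ := apply_const_of_homogeneous hA hmul hsup (c * d) ▸
      hmono _ (hA.1 _) ψ hψ fun x => (mul_le_mul_right le_sup_left c).trans (hcψ x)
    rw [le_div_iff₀ (coe_pos.2 hc), mul_comm]
    exact_mod_cast this
  · exact upperExtension_mono hA fun _ => le_sup_right

theorem exists_extension_of_homogeneous (hA : IsVMulSubspace A)
    (hmono : ∀ ψ ∈ A, ∀ χ ∈ A, (∀ x, ψ x ≤ χ x) → μ ψ ≤ μ χ)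
    (hmul : ∀ (c : I), ∀ ψ ∈ A, μ (cMul c ψ) = c * μ ψ)
    (hsup : ∀ (c : I), ∀ ψ ∈ A, μ (cSup c ψ) = c ⊔ μ ψ) :
    ∃ μ' : C(X, I) → I, (∀ ψ ∈ A, μ' ψ = μ ψ) ∧
      (∀ ψ χ : C(X, I), (∀ x, ψ x ≤ χ x) → μ' ψ ≤ μ' χ) ∧
      (∀ (c : I) (ψ : C(X, I)), μ' (cMul c ψ) = c * μ' ψ) ∧
      (∀ (c : I) (ψ : C(X, I)), μ' (cSup c ψ) = c ⊔ μ' ψ) :=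
  ⟨fun g => ⟨upperExtension A μ g, upperExtension_mem hA g⟩,
    fun _ hψ => Subtype.ext (upperExtension_eq_of_mem hA hmono hmul hψ),
    fun _ _ h => upperExtension_mono hA h,
    fun c ψ => Subtype.ext (upperExtension_cMul hA hmul c ψ),
    fun c ψ => Subtype.ext (upperExtension_cSup hA hmono hmul hsup c ψ)⟩

end

theorem one_step_extension_general {X : Type*} [TopologicalSpace X]
    (A : Set C(X, I)) (hA : IsVMulSubspace A) (μ : C(X, I) → I)
    (hmono : ∀ ψ ∈ A, ∀ χ ∈ A, (∀ x, ψ x ≤ χ x) → μ ψ ≤ μ χ)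
    (hmul : ∀ (c : I), ∀ ψ ∈ A, μ (cMul c ψ) = c * μ ψ)
    (hsup : ∀ (c : I), ∀ ψ ∈ A, μ (cSup c ψ) = c ⊔ μ ψ)
    (φ : C(X, I)) :
    ∃ μ' : C(X, I) → I,
      (∀ ψ ∈ A, μ' ψ = μ ψ) ∧
      (∀ ψ ∈ A ∪ {χ | ∃ c d : I, χ = cSup d (cMul c φ)},
        ∀ χ ∈ A ∪ {χ | ∃ c d : I, χ = cSup d (cMul c φ)},
          (∀ x, ψ x ≤ χ x) → μ' ψ ≤ μ' χ) ∧
      (∀ (c : I), ∀ ψ ∈ A ∪ {χ | ∃ c d : I, χ = cSup d (cMul c φ)}, μ' (cMul c ψ) = c * μ' ψ) ∧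
      (∀ (c : I), ∀ ψ ∈ A ∪ {χ | ∃ c d : I, χ = cSup d (cMul c φ)}, μ' (cSup c ψ) = c ⊔ μ' ψ) := by
  obtain ⟨μ', hext, hmono', hmul', hsup'⟩ := exists_extension_of_homogeneous hA hmono hmul hsup
  exact ⟨μ', hext, fun ψ _ χ _ => hmono' ψ χ, fun c ψ _ => hmul' c ψ, fun c ψ _ => hsup' c ψ⟩

/-- One-step extension: a monotone, `·`-homogeneous, `∨`-homogeneous functional on a
`(∨,·)`-subspace `A` extends to `A' = A ∪ {d ∨ (c·φ)}`. -/
theorem one_step_extension {X : Type*} [TopologicalSpace X] [CompactSpace X] [T2Space X]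
    (A : Set C(X, I)) (hA : IsVMulSubspace A) (μ : C(X, I) → I)
    (hmono : ∀ ψ ∈ A, ∀ χ ∈ A, (∀ x, ψ x ≤ χ x) → μ ψ ≤ μ χ)
    (hmul : ∀ (c : I), ∀ ψ ∈ A, μ (cMul c ψ) = c * μ ψ)
    (hsup : ∀ (c : I), ∀ ψ ∈ A, μ (cSup c ψ) = c ⊔ μ ψ)
    (φ : C(X, I)) :
    ∃ μ' : C(X, I) → I,
      (∀ ψ ∈ A, μ' ψ = μ ψ) ∧
      (∀ ψ ∈ A ∪ {χ | ∃ c d : I, χ = cSup d (cMul c φ)},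
        ∀ χ ∈ A ∪ {χ | ∃ c d : I, χ = cSup d (cMul c φ)},
          (∀ x, ψ x ≤ χ x) → μ' ψ ≤ μ' χ) ∧
      (∀ (c : I), ∀ ψ ∈ A ∪ {χ | ∃ c d : I, χ = cSup d (cMul c φ)}, μ' (cMul c ψ) = c * μ' ψ) ∧
      (∀ (c : I), ∀ ψ ∈ A ∪ {χ | ∃ c d : I, χ = cSup d (cMul c φ)}, μ' (cSup c ψ) = c ⊔ μ' ψ) :=
  one_step_extension_general A hA μ hmono hmul hsup φ
end
end

section
/- Let X be a compact Hausdorff space, A a (∨,·)-subspace of C(X,[0,1]) (A contains all constant functions and c ∨ ψ, c·ψ ∈ A for all c ∈ [0,1], ψ ∈ A), and μ : A → [0,1] a monotone, ·-homogeneous and ∨-homogeneous functional. Then there exists a monotone, ·-homogeneous and ∨-homogeneous functional μ₁ : C(X,[0,1]) → [0,1] with μ₁|A = μ. -/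
open unitInterval

noncomputable section

namespace FullExt
variable {X : Type*} [TopologicalSpace X]

lemma coeI_sup (a b : I) : ((a ⊔ b : I) : ℝ) = max (a:ℝ) (b:ℝ) := rfl
lemma coeI_mul (a b : I) : ((a * b : I) : ℝ) = (a:ℝ) * (b:ℝ) := rfl
lemma leI_iff {a b : I} : a ≤ b ↔ (a:ℝ) ≤ (b:ℝ) := Iff.rfl
lemma cSup_apply (c : I) (f : C(X,I)) (x : X) : cSup c f x = c ⊔ f x := rfl
lemma cMul_apply (c : I) (f : C(X,I)) (x : X) : cMul c f x = c * f x := rfl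

section Step
variable (A : Set C(X,I)) (m : C(X,I) → I) (χ : C(X,I))

/-- lower constraint set -/
def Lset : Set ℝ :=
  insert 0 {s | s ≤ 1 ∧ ∃ ψ ∈ A, ∃ e d : I,
    (∀ x, ψ x ≤ (cSup e (cMul d χ)) x) ∧ (e:ℝ) < (m ψ : ℝ) ∧ s = (m ψ : ℝ)/(d:ℝ)}

def tR : ℝ := sSup (Lset A m χ)

lemma Lset_bdd : ∀ s ∈ Lset A m χ, s ≤ 1 := by
  rintro s (rfl | ⟨h1, -⟩)
  · norm_num
  · exact h1

lemma Lset_bddAbove : BddAbove (Lset A m χ) := ⟨1, fun s hs => Lset_bdd A m χ s hs⟩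

lemma tR_mem : tR A m χ ∈ Set.Icc (0:ℝ) 1 := by
  constructor
  · exact le_csSup (Lset_bddAbove A m χ) (Set.mem_insert _ _)
  · exact Real.sSup_le (Lset_bdd A m χ) zero_le_one

variable {A m}
variable (hA : IsVMulSubspace A)
  (hmono : ∀ ψ ∈ A, ∀ φ ∈ A, (∀ x, ψ x ≤ φ x) → m ψ ≤ m φ)
  (hmul : ∀ c : I, ∀ ψ ∈ A, m (cMul c ψ) = c * m ψ)
  (hsup : ∀ c : I, ∀ ψ ∈ A, m (cSup c ψ) = c ⊔ m ψ)

include hA hmul hsup in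
lemma h_const : ∀ c : I, m (ContinuousMap.const X c) = c := by
  intro c
  have h0 : (ContinuousMap.const X (0:I)) = cMul 0 (ContinuousMap.const X (0:I)) := by
    ext x
    show ((0:I):ℝ) = ((0 * (0:I) : I) : ℝ)
    rw [coeI_mul]; norm_num
  have hm0 : m (ContinuousMap.const X (0:I)) = 0 := by
    have := hmul 0 _ (hA.1 0)
    rw [← h0] at this
    apply Subtype.ext
    have h1 : (m (ContinuousMap.const X (0:I)) : ℝ) = ((0:I):ℝ) * (m (ContinuousMap.const X (0:I)) : ℝ) := by
      conv_lhs => rw [this, coeI_mul]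
    simpa using h1
  have hc : (ContinuousMap.const X c) = cSup c (ContinuousMap.const X (0:I)) := by
    ext x
    show (c:ℝ) = ((c ⊔ (0:I) : I) : ℝ)
    rw [coeI_sup]
    exact (max_eq_left c.2.1).symm
  rw [hc, hsup c _ (hA.1 0), hm0]
  apply Subtype.ext
  rw [coeI_sup]
  exact max_eq_left c.2.1

include hA hmono hmul hsup in
lemma h_bound : ∀ ψ ∈ A, ∀ e d : I, (∀ x, ψ x ≤ (cSup e (cMul d χ)) x) →
    (e:ℝ) < (m ψ : ℝ) → (m ψ : ℝ) ≤ (d:ℝ) ∧ (0:ℝ) < (d:ℝ) := by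
  intro ψ hψ e d hle he
  have h1 : ∀ x, ψ x ≤ (ContinuousMap.const X (e ⊔ d)) x := by
    intro x
    refine le_trans (hle x) ?_
    rw [leI_iff, cSup_apply, coeI_sup, cMul_apply, coeI_mul]
    show max (e:ℝ) ((d:ℝ) * (χ x : ℝ)) ≤ ((e ⊔ d : I) : ℝ)
    rw [coeI_sup]
    exact max_le_max le_rfl (by nlinarith [(χ x).2.2, d.2.1])
  have h2 := hmono ψ hψ _ (hA.1 (e ⊔ d)) h1
  rw [h_const hA hmul hsup] at h2
  rw [leI_iff, coeI_sup] at h2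
  have hmd : (m ψ : ℝ) ≤ (d:ℝ) := by
    rcases le_max_iff.1 h2 with h | h
    · linarith
    · exact h
  exact ⟨hmd, lt_of_le_of_lt e.2.1 (lt_of_lt_of_le he hmd)⟩

include hA hmono hmul hsup in
lemma K1 : ∀ ψ ∈ A, ∀ e d : I, (∀ x, ψ x ≤ (cSup e (cMul d χ)) x) →
    (m ψ : ℝ) ≤ max (e:ℝ) ((d:ℝ) * tR A m χ) := by
  intro ψ hψ e d hle
  rcases le_or_gt ((m ψ : ℝ)) (e:ℝ) with h | h
  · exact le_max_of_le_left h
  · obtain ⟨hmd, hd⟩ := h_bound χ hA hmono hmul hsup ψ hψ e d hle h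
    have hmem : (m ψ : ℝ)/(d:ℝ) ∈ Lset A m χ :=
      Set.mem_insert_iff.2 (Or.inr ⟨(div_le_one hd).2 hmd, ψ, hψ, e, d, hle, h, rfl⟩)
    have ht := le_csSup (Lset_bddAbove A m χ) hmem
    refine le_max_of_le_right ?_
    rw [div_le_iff₀ hd] at ht
    rw [mul_comm]
    exact ht

lemma mul_tR_le {d K : ℝ} (hd : 0 ≤ d) (h : ∀ s ∈ Lset A m χ, d * s ≤ K) :
    d * tR A m χ ≤ K := by
  have hK : 0 ≤ K := by have := h 0 (Set.mem_insert _ _); linarith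
  rcases eq_or_lt_of_le hd with rfl | hd
  · simpa using hK
  · have ht : tR A m χ ≤ K / d :=
      Real.sSup_le (fun s hs => (le_div_iff₀ hd).2 (by linarith [h s hs, mul_comm d s]))
        (div_nonneg hK hd.le)
    calc d * tR A m χ ≤ d * (K / d) := by nlinarith
    _ = K := by field_simp


include hA hmono hmul hsup in
lemma K2 : ∀ ψ ∈ A, ∀ e d : I, (∀ x, (cSup e (cMul d χ)) x ≤ ψ x) →
    max (e:ℝ) ((d:ℝ) * tR A m χ) ≤ (m ψ : ℝ) := by
  intro ψ hψ e d hle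
  apply max_le
  · -- constant e ≤ ψ
    have h1 : ∀ x, (ContinuousMap.const X e) x ≤ ψ x := by
      intro x
      refine le_trans ?_ (hle x)
      rw [leI_iff, cSup_apply, coeI_sup]
      exact le_max_left _ _
    have := hmono _ (hA.1 e) ψ hψ h1
    rw [h_const hA hmul hsup] at this
    exact this
  · apply mul_tR_le χ d.2.1
    rintro s (rfl | ⟨hs1, ψ', hψ', e', d', hle', he', rfl⟩)
    · simpa using (m ψ).2.1
    · -- cross argument
      by_cases hd0 : (d:ℝ) = 0
      · rw [hd0, zero_mul]; exact (m ψ).2.1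
      have hd : 0 < (d:ℝ) := lt_of_le_of_ne d.2.1 (Ne.symm hd0)
      obtain ⟨hb', hd'⟩ := h_bound χ hA hmono hmul hsup ψ' hψ' e' d' hle' he'
      have hpt : ∀ x, (cMul d ψ') x ≤ (cSup (d * e') (cMul d' ψ)) x := by
        intro x
        rw [leI_iff, cMul_apply, cSup_apply, cMul_apply, coeI_mul, coeI_sup, coeI_mul, coeI_mul]
        have h1 : (ψ' x : ℝ) ≤ max (e':ℝ) ((d':ℝ) * (χ x : ℝ)) := hle' x
        have h2 : (d:ℝ) * (χ x : ℝ) ≤ (ψ x : ℝ) := by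
          have := hle x
          rw [leI_iff, cSup_apply, coeI_sup, cMul_apply, coeI_mul] at this
          exact le_trans (le_max_right _ _) this
        rcases le_max_iff.1 h1 with h3 | h3
        · exact le_max_of_le_left (by nlinarith)
        · exact le_max_of_le_right (by nlinarith [d'.2.1, (χ x).2.1])
      have hmm := hmono _ (hA.2 d ψ' hψ').2 _ (hA.2 (d*e') _ (hA.2 d' ψ hψ).2).1 hpt
      rw [hmul d ψ' hψ', hsup (d*e') _ (hA.2 d' ψ hψ).2, hmul d' ψ hψ] at hmm
      rw [leI_iff, coeI_mul, coeI_sup, coeI_mul, coeI_mul] at hmm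
      have h3 : (d:ℝ) * (m ψ' : ℝ) ≤ (d':ℝ) * (m ψ : ℝ) := by
        rcases le_max_iff.1 hmm with h | h
        · nlinarith
        · exact h
      rw [mul_div_assoc'] -- d * (a / d') = d * a / d'
      rw [div_le_iff₀ hd']
      nlinarith

include hA hmono hmul hsup in
lemma K3 : ∀ e d e₀ d₀ : I, (∀ x, (cSup e (cMul d χ)) x ≤ (cSup e₀ (cMul d₀ χ)) x) →
    max (e:ℝ) ((d:ℝ) * tR A m χ) ≤ max (e₀:ℝ) ((d₀:ℝ) * tR A m χ) := by
  intro e d e₀ d₀ hle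
  apply max_le
  · have h := K1 χ hA hmono hmul hsup (ContinuousMap.const X e) (hA.1 e) e₀ d₀ ?_
    · rw [h_const hA hmul hsup] at h; exact h
    · intro x
      refine le_trans ?_ (hle x)
      rw [leI_iff, cSup_apply, coeI_sup]
      exact le_max_left _ _
  · apply mul_tR_le χ d.2.1
    rintro s (rfl | ⟨hs1, ψ, hψ, e', d', hle', he', rfl⟩)
    · simp [le_max_iff]; left; exact e₀.2.1
    · by_cases hd0 : (d:ℝ) = 0
      · rw [hd0, zero_mul]; exact le_max_of_le_left e₀.2.1
      have hd : 0 < (d:ℝ) := lt_of_le_of_ne d.2.1 (Ne.symm hd0)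
      obtain ⟨hb', hd'⟩ := h_bound χ hA hmono hmul hsup ψ hψ e' d' hle' he'
      have hdchi : ∀ x, (d:ℝ) * (χ x : ℝ) ≤ max (e₀:ℝ) ((d₀:ℝ) * (χ x : ℝ)) := by
        intro x
        have := hle x
        rw [leI_iff, cSup_apply, coeI_sup, cMul_apply, coeI_mul, cSup_apply, coeI_sup,
          cMul_apply, coeI_mul] at this
        exact le_trans (le_max_right _ _) this
      have hpt : ∀ x, (cMul d ψ) x ≤ (cSup ((d * e') ⊔ (d' * e₀)) (cMul (d' * d₀) χ)) x := by
        intro x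
        rw [leI_iff, cMul_apply, cSup_apply, cMul_apply, coeI_mul, coeI_sup, coeI_sup,
          coeI_mul, coeI_mul, coeI_mul]
        have h1 : (ψ x : ℝ) ≤ max (e':ℝ) ((d':ℝ) * (χ x : ℝ)) := hle' x
        rcases le_max_iff.1 h1 with h3 | h3
        · exact le_max_of_le_left (le_max_of_le_left (by nlinarith))
        · rcases le_max_iff.1 (hdchi x) with h4 | h4
          · exact le_max_of_le_left (le_max_of_le_right (by nlinarith [d'.2.1]))
          · refine le_max_of_le_right ?_
            rw [coeI_mul]
            nlinarith [mul_le_mul_of_nonneg_left h3 d.2.1, mul_le_mul_of_nonneg_left h4 d'.2.1]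
      have hK := K1 χ hA hmono hmul hsup _ (hA.2 d ψ hψ).2 ((d * e') ⊔ (d' * e₀)) (d' * d₀) hpt
      rw [hmul d ψ hψ] at hK
      rw [coeI_mul, coeI_sup, coeI_mul, coeI_mul, coeI_mul] at hK
      have h4 : (d:ℝ) * (m ψ : ℝ) ≤ max ((d':ℝ) * (e₀:ℝ)) ((d':ℝ) * (d₀:ℝ) * tR A m χ) := by
        rcases le_max_iff.1 hK with h | h
        · rcases le_max_iff.1 h with h5 | h5
          · nlinarith
          · exact le_max_of_le_left h5
        · exact le_max_of_le_right h
      rw [mul_div_assoc', div_le_iff₀ hd']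
      rcases le_max_iff.1 h4 with h | h
      · exact le_trans h (by nlinarith [le_max_left (e₀:ℝ) ((d₀:ℝ) * tR A m χ)])
      · refine le_trans h ?_
        have := le_max_right (e₀:ℝ) ((d₀:ℝ) * tR A m χ)
        nlinarith


end Step

section Ext
open Classical in
/-- extended domain -/
def ExtSet (A : Set C(X,I)) (χ : C(X,I)) : Set C(X,I) :=
  A ∪ {f | ∃ e d : I, f = cSup e (cMul d χ)}

open Classical in
/-- extended functional -/
def mExt (A : Set C(X,I)) (m : C(X,I) → I) (χ : C(X,I)) : C(X,I) → I := fun f =>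
  if f ∈ A then m f
  else if h : ∃ e d : I, f = cSup e (cMul d χ) then
    ⟨max (h.choose : ℝ) ((h.choose_spec.choose : ℝ) * tR A m χ), by
      constructor
      · exact le_max_of_le_left h.choose.2.1
      · exact max_le h.choose.2.2
          (mul_le_one₀ h.choose_spec.choose.2.2 (tR_mem A m χ).1 (tR_mem A m χ).2)⟩
  else 0

variable {A : Set C(X,I)} {m : C(X,I) → I} (χ : C(X,I))

lemma mExt_memA {f : C(X,I)} (hfA : f ∈ A) : mExt A m χ f = m f := by
  rw [mExt, if_pos hfA]

variable (hA : IsVMulSubspace A)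
  (hmono : ∀ ψ ∈ A, ∀ φ ∈ A, (∀ x, ψ x ≤ φ x) → m ψ ≤ m φ)
  (hmul : ∀ c : I, ∀ ψ ∈ A, m (cMul c ψ) = c * m ψ)
  (hsup : ∀ c : I, ∀ ψ ∈ A, m (cSup c ψ) = c ⊔ m ψ)

include hA hmono hmul hsup in
lemma mExt_rep (f : C(X,I)) (e d : I) (hrep : f = cSup e (cMul d χ)) :
    (mExt A m χ f : ℝ) = max (e:ℝ) ((d:ℝ) * tR A m χ) := by
  by_cases hfA : f ∈ A
  · rw [mExt_memA χ hfA]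
    refine le_antisymm
      (K1 χ hA hmono hmul hsup f hfA e d (fun x => le_of_eq (ContinuousMap.congr_fun hrep x)))
      (K2 χ hA hmono hmul hsup f hfA e d (fun x => le_of_eq (ContinuousMap.congr_fun hrep.symm x)))
  · have h : ∃ e d : I, f = cSup e (cMul d χ) := ⟨e, d, hrep⟩
    rw [mExt, if_neg hfA, dif_pos h]
    have h1 : f = cSup h.choose (cMul h.choose_spec.choose χ) := h.choose_spec.choose_spec
    show max (h.choose : ℝ) ((h.choose_spec.choose : ℝ) * tR A m χ) = _
    refine le_antisymm
      (K3 χ hA hmono hmul hsup _ _ _ _ (fun x => le_of_eq (ContinuousMap.congr_fun (h1.symm.trans hrep) x)))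
      (K3 χ hA hmono hmul hsup _ _ _ _ (fun x => le_of_eq (ContinuousMap.congr_fun (hrep.symm.trans h1) x)))

lemma rep_mul (c e d : I) : cMul c (cSup e (cMul d χ)) = cSup (c*e) (cMul (c*d) χ) := by
  ext x
  show (c:ℝ) * max (e:ℝ) ((d:ℝ) * (χ x : ℝ)) = max ((c:ℝ) * (e:ℝ)) ((c:ℝ) * (d:ℝ) * (χ x : ℝ))
  rw [mul_max_of_nonneg _ _ c.2.1, mul_assoc]

lemma rep_sup (c e d : I) : cSup c (cSup e (cMul d χ)) = cSup (c ⊔ e) (cMul d χ) := by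
  ext x
  show max (c:ℝ) (max (e:ℝ) ((d:ℝ) * (χ x : ℝ))) = max (max (c:ℝ) (e:ℝ)) ((d:ℝ) * (χ x : ℝ))
  rw [max_assoc]

lemma chi_rep : χ = cSup 0 (cMul 1 χ) := by
  ext x
  show (χ x : ℝ) = max ((0:I):ℝ) (((1:I):ℝ) * (χ x : ℝ))
  simp [max_eq_right (χ x).2.1]

include hA hmono hmul hsup in
lemma step :
    IsVMulSubspace (ExtSet A χ) ∧ A ⊆ ExtSet A χ ∧ χ ∈ ExtSet A χ ∧
    (∀ ψ ∈ A, mExt A m χ ψ = m ψ) ∧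
    (∀ ψ ∈ ExtSet A χ, ∀ φ ∈ ExtSet A χ, (∀ x, ψ x ≤ φ x) → mExt A m χ ψ ≤ mExt A m χ φ) ∧
    (∀ c : I, ∀ ψ ∈ ExtSet A χ, mExt A m χ (cMul c ψ) = c * mExt A m χ ψ) ∧
    (∀ c : I, ∀ ψ ∈ ExtSet A χ, mExt A m χ (cSup c ψ) = c ⊔ mExt A m χ ψ) := by
  have hrepval := mExt_rep χ hA hmono hmul hsup
  refine ⟨⟨fun c => Or.inl (hA.1 c), ?_⟩, Set.subset_union_left, ?_, ?_, ?_, ?_, ?_⟩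
  · rintro c ψ (hψ | ⟨e, d, rfl⟩)
    · exact ⟨Or.inl (hA.2 c ψ hψ).1, Or.inl (hA.2 c ψ hψ).2⟩
    · exact ⟨Or.inr ⟨c ⊔ e, d, rep_sup χ c e d⟩, Or.inr ⟨c*e, c*d, rep_mul χ c e d⟩⟩
  · exact Or.inr ⟨0, 1, chi_rep χ⟩
  · exact fun ψ hψ => mExt_memA χ hψ
  · rintro ψ (hψ | ⟨e, d, rfl⟩) φ (hφ | ⟨e₀, d₀, rfl⟩) hle
    · rw [mExt_memA χ hψ, mExt_memA χ hφ]; exact hmono ψ hψ φ hφ hle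
    · rw [leI_iff, mExt_memA χ hψ, hrepval _ e₀ d₀ rfl]
      exact K1 χ hA hmono hmul hsup ψ hψ e₀ d₀ hle
    · rw [leI_iff, mExt_memA χ hφ, hrepval _ e d rfl]
      exact K2 χ hA hmono hmul hsup φ hφ e d hle
    · rw [leI_iff, hrepval _ e d rfl, hrepval _ e₀ d₀ rfl]
      exact K3 χ hA hmono hmul hsup e d e₀ d₀ hle
  · rintro c ψ (hψ | ⟨e, d, rfl⟩)
    · rw [mExt_memA χ (hA.2 c ψ hψ).2, mExt_memA χ hψ]; exact hmul c ψ hψ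
    · apply Subtype.ext
      rw [coeI_mul, hrepval _ e d rfl, hrepval _ (c*e) (c*d) (rep_mul χ c e d),
        coeI_mul, coeI_mul, mul_assoc, mul_max_of_nonneg _ _ c.2.1]
  · rintro c ψ (hψ | ⟨e, d, rfl⟩)
    · rw [mExt_memA χ (hA.2 c ψ hψ).1, mExt_memA χ hψ]; exact hsup c ψ hψ
    · apply Subtype.ext
      rw [coeI_sup, hrepval _ e d rfl, hrepval _ (c ⊔ e) d (rep_sup χ c e d),
        coeI_sup, max_assoc]


end Ext
end FullExt

open FullExt in
theorem full_extension' {X : Type*} [TopologicalSpace X]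
    (A : Set C(X, I)) (hA : IsVMulSubspace A) (μ : C(X, I) → I)
    (hmono : ∀ ψ ∈ A, ∀ χ ∈ A, (∀ x, ψ x ≤ χ x) → μ ψ ≤ μ χ)
    (hmul : ∀ (c : I), ∀ ψ ∈ A, μ (cMul c ψ) = c * μ ψ)
    (hsup : ∀ (c : I), ∀ ψ ∈ A, μ (cSup c ψ) = c ⊔ μ ψ) :
    ∃ μ₁ : C(X, I) → I,
      (∀ ψ ∈ A, μ₁ ψ = μ ψ) ∧
      (∀ ψ χ : C(X, I), (∀ x, ψ x ≤ χ x) → μ₁ ψ ≤ μ₁ χ) ∧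
      (∀ (c : I) (ψ : C(X, I)), μ₁ (cMul c ψ) = c * μ₁ ψ) ∧
      (∀ (c : I) (ψ : C(X, I)), μ₁ (cSup c ψ) = c ⊔ μ₁ ψ) := by
  classical
  -- the poset of admissible extensions
  let P := {p : Set C(X,I) × (C(X,I) → I) //
    IsVMulSubspace p.1 ∧
    (∀ ψ ∈ p.1, ∀ φ ∈ p.1, (∀ x, ψ x ≤ φ x) → p.2 ψ ≤ p.2 φ) ∧
    (∀ c : I, ∀ ψ ∈ p.1, p.2 (cMul c ψ) = c * p.2 ψ) ∧
    (∀ c : I, ∀ ψ ∈ p.1, p.2 (cSup c ψ) = c ⊔ p.2 ψ) ∧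
    A ⊆ p.1 ∧ (∀ ψ ∈ A, p.2 ψ = μ ψ)}
  let r : P → P → Prop := fun p q => p.1.1 ⊆ q.1.1 ∧ ∀ f ∈ p.1.1, q.1.2 f = p.1.2 f
  have base : P := ⟨(A, μ), hA, hmono, hmul, hsup, subset_rfl, fun _ _ => rfl⟩
  have htrans : ∀ {a b c : P}, r a b → r b c → r a c := by
    rintro a b c ⟨hab1, hab2⟩ ⟨hbc1, hbc2⟩
    exact ⟨hab1.trans hbc1, fun f hf => (hbc2 f (hab1 hf)).trans (hab2 f hf)⟩
  have hchains : ∀ c : Set P, IsChain r c → ∃ ub, ∀ a ∈ c, r a ub := by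
    intro c hc
    by_cases hcE : c.Nonempty
    case neg => exact ⟨base, fun a ha => absurd ⟨a, ha⟩ hcE⟩
    obtain ⟨p₀, hp₀⟩ := hcE
    set D : Set C(X,I) := {f | ∃ p ∈ c, f ∈ (p : P).1.1} with hD
    set g : C(X,I) → I := fun f =>
      if h : ∃ p ∈ c, f ∈ (p : P).1.1 then (Exists.choose h).1.2 f else μ f with hg
    -- agreement of g with any member of the chain
    have hag : ∀ p ∈ c, ∀ f, f ∈ (p : P).1.1 → g f = p.1.2 f := by
      intro p hp f hf
      have h : ∃ q ∈ c, f ∈ (q : P).1.1 := ⟨p, hp, hf⟩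
      have hgf : g f = (Exists.choose h).1.2 f := dif_pos h
      obtain ⟨hq, hfq⟩ := h.choose_spec
      rw [hgf]
      by_cases hpq : p = h.choose
      · rw [hpq]
      · rcases hc hp hq hpq with hr | hr
        · exact hr.2 f hf
        · exact (hr.2 f hfq).symm
    -- any two elements of D lie in a common member
    have hcomm : ∀ ψ ∈ D, ∀ φ ∈ D, ∃ q ∈ c, ψ ∈ (q : P).1.1 ∧ φ ∈ (q : P).1.1 := by
      rintro ψ ⟨p, hp, hψ⟩ φ ⟨q, hq, hφ⟩
      by_cases hpq : p = q
      · exact ⟨q, hq, hpq ▸ hψ, hφ⟩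
      · rcases hc hp hq hpq with hr | hr
        · exact ⟨q, hq, hr.1 hψ, hφ⟩
        · exact ⟨p, hp, hψ, hr.1 hφ⟩
    refine ⟨⟨(D, g), ⟨?_, ?_⟩, ?_, ?_, ?_, ?_, ?_⟩, ?_⟩
    · exact fun cc => ⟨p₀, hp₀, p₀.2.1.1 cc⟩
    · rintro cc ψ ⟨p, hp, hψ⟩
      exact ⟨⟨p, hp, (p.2.1.2 cc ψ hψ).1⟩, ⟨p, hp, (p.2.1.2 cc ψ hψ).2⟩⟩
    · intro ψ hψ φ hφ hle
      obtain ⟨q, hq, hψq, hφq⟩ := hcomm ψ hψ φ hφ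
      show g ψ ≤ g φ
      rw [hag q hq ψ hψq, hag q hq φ hφq]
      exact q.2.2.1 ψ hψq φ hφq hle
    · rintro cc ψ ⟨p, hp, hψ⟩
      show g (cMul cc ψ) = cc * g ψ
      rw [hag p hp ψ hψ, hag p hp _ (p.2.1.2 cc ψ hψ).2]
      exact p.2.2.2.1 cc ψ hψ
    · rintro cc ψ ⟨p, hp, hψ⟩
      show g (cSup cc ψ) = cc ⊔ g ψ
      rw [hag p hp ψ hψ, hag p hp _ (p.2.1.2 cc ψ hψ).1]
      exact p.2.2.2.2.1 cc ψ hψ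
    · exact fun ψ hψ => ⟨p₀, hp₀, p₀.2.2.2.2.2.1 hψ⟩
    · intro ψ hψ
      show g ψ = μ ψ
      rw [hag p₀ hp₀ ψ (p₀.2.2.2.2.2.1 hψ)]
      exact p₀.2.2.2.2.2.2 ψ hψ
    · intro p hp
      exact ⟨fun f hf => ⟨p, hp, hf⟩, fun f hf => hag p hp f hf⟩
  obtain ⟨M, hM⟩ := exists_maximal_of_chains_bounded hchains @htrans
  -- the maximal element is defined on all of C(X,I)
  have hMuniv : ∀ f : C(X,I), f ∈ M.1.1 := by
    by_contra hne
    push_neg at hne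
    obtain ⟨χ₀, hχ₀⟩ := hne
    obtain ⟨hB1, hB2, hB3, hB4, hB5, hB6, hB7⟩ :=
      step χ₀ M.2.1 M.2.2.1 M.2.2.2.1 M.2.2.2.2.1
    let hb : P := ⟨(ExtSet M.1.1 χ₀, mExt M.1.1 M.1.2 χ₀),
      hB1, hB5, hB6, hB7, M.2.2.2.2.2.1.trans hB2,
      fun ψ hψ => (hB4 ψ (M.2.2.2.2.2.1 hψ)).trans (M.2.2.2.2.2.2 ψ hψ)⟩
    have hMb : r M hb := ⟨hB2, fun f hf => hB4 f hf⟩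
    have := (hM hb hMb).1 hB3
    exact hχ₀ this
  refine ⟨M.1.2, M.2.2.2.2.2.2, ?_, ?_, ?_⟩
  · exact fun ψ χ hle => M.2.2.1 ψ (hMuniv ψ) χ (hMuniv χ) hle
  · exact fun cc ψ => M.2.2.2.1 cc ψ (hMuniv ψ)
  · exact fun cc ψ => M.2.2.2.2.1 cc ψ (hMuniv ψ)


/-- Hahn–Banach type extension: a monotone, `·`-homogeneous and `∨`-homogeneous functional
on a `(∨,·)`-subspace extends to all of `C(X,[0,1])`. -/
theorem full_extension {X : Type*} [TopologicalSpace X] [CompactSpace X] [T2Space X]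
    (A : Set C(X, I)) (hA : IsVMulSubspace A) (μ : C(X, I) → I)
    (hmono : ∀ ψ ∈ A, ∀ χ ∈ A, (∀ x, ψ x ≤ χ x) → μ ψ ≤ μ χ)
    (hmul : ∀ (c : I), ∀ ψ ∈ A, μ (cMul c ψ) = c * μ ψ)
    (hsup : ∀ (c : I), ∀ ψ ∈ A, μ (cSup c ψ) = c ⊔ μ ψ) :
    ∃ μ₁ : C(X, I) → I,
      (∀ ψ ∈ A, μ₁ ψ = μ ψ) ∧
      (∀ ψ χ : C(X, I), (∀ x, ψ x ≤ χ x) → μ₁ ψ ≤ μ₁ χ) ∧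
      (∀ (c : I) (ψ : C(X, I)), μ₁ (cMul c ψ) = c * μ₁ ψ) ∧
      (∀ (c : I) (ψ : C(X, I)), μ₁ (cSup c ψ) = c ⊔ μ₁ ψ) := by
  exact full_extension' A hA μ hmono hmul hsup
end
end

section
/- On X = {1,2,3} with φ₁ = (0, 1/3, 2/3), φ₂ = (1/3, 1/3, 1), φ₃ = φ₁ ∨ φ₂ = (1/3, 1/2, 1), set m₁ = m₂ = 1/3, m₃ = 1/2, and define μ on H = ∪_{i=1}^3 {d ∨ (c·φ_i) : c, d ∈ [0,1]} by μ(d ∨ (c·φ_i)) = d ∨ (c·m_i). Then μ is well-defined and monotone: whenever ψ, ψ' ∈ H satisfy ψ ≤ ψ' pointwise, μ(ψ) ≤ μ(ψ'). -/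
open unitInterval

noncomputable section

/-- `φ₁ = (0, 1/3, 2/3)`. -/
def phi1 : Fin 3 → I := ![⟨0, by norm_num⟩, ⟨1/3, by norm_num⟩, ⟨2/3, by norm_num⟩]

/-- `φ₂ = (1/3, 1/3, 1)`. -/
def phi2 : Fin 3 → I := ![⟨1/3, by norm_num⟩, ⟨1/3, by norm_num⟩, ⟨1, by norm_num⟩]

/-- `φ₃ = φ₁ ∨ φ₂ = (1/3, 1/2, 1)`. -/
def phi3 : Fin 3 → I := ![⟨1/3, by norm_num⟩, ⟨1/2, by norm_num⟩, ⟨1, by norm_num⟩]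

/-- `H_φ = {d ∨ (c·φ) : c, d ∈ [0,1]}`. -/
def Hset (φ : Fin 3 → I) : Set (Fin 3 → I) :=
  {ψ | ∃ c d : I, ψ = fun x => d ⊔ c * φ x}

/-- `H = H₁ ∪ H₂ ∪ H₃`. -/
def Hfull : Set (Fin 3 → I) := Hset phi1 ∪ Hset phi2 ∪ Hset phi3

/-- The values `m₁ = m₂ = 1/3`, `m₃ = 1/2`. -/
def mval : Fin 3 → I := ![⟨1/3, by norm_num⟩, ⟨1/3, by norm_num⟩, ⟨1/2, by norm_num⟩]

/-- The family `(φ₁, φ₂, φ₃)`. -/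
def Phi : Fin 3 → (Fin 3 → I) := ![phi1, phi2, phi3]

/-- The functional `μ(d ∨ (c·φᵢ)) = d ∨ (c·mᵢ)` on `H` is well defined and monotone:
whenever `d ∨ (c·φᵢ) ≤ d' ∨ (c'·φⱼ)` pointwise, `d ∨ (c·mᵢ) ≤ d' ∨ (c'·mⱼ)`. -/
theorem mu_well_defined_and_monotone :
    ∀ i j : Fin 3, ∀ c d c' d' : I,
      (∀ x, d ⊔ c * Phi i x ≤ d' ⊔ c' * Phi j x) →
        d ⊔ c * mval i ≤ d' ⊔ c' * mval j := by
  intro i j c d c' d' h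
  have hm : ∀ k : Fin 3, mval k = Phi k 1 := by
    intro k
    fin_cases k <;> simp [mval, Phi, phi1, phi2, phi3]
  rw [hm i, hm j]
  exact h 1
end
end

section
/- There exists a functional μ₁ : [0,1]³ → [0,1] on functions on the three-point set X = {1,2,3} that is monotone, ·-homogeneous (μ₁(c·φ) = c·μ₁(φ) for c ∈ [0,1]) and ∨-homogeneous (μ₁(c ∨ φ) = c ∨ μ₁(φ) for c ∈ [0,1]), but does not preserve ∨ for comonotone functions: there exist comonotone φ, ψ ∈ [0,1]³ with μ₁(φ ∨ ψ) ≠ μ₁(φ) ∨ μ₁(ψ). -/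
open unitInterval

noncomputable section

/-- There is a monotone, `·`-homogeneous and `∨`-homogeneous functional on `[0,1]³`
which does not preserve `∨` for comonotone functions. -/
theorem exists_monotone_homogeneous_not_comonotone_maxitive :
    ∃ μ₁ : (Fin 3 → I) → I,
      (∀ φ ψ : Fin 3 → I, (∀ x, φ x ≤ ψ x) → μ₁ φ ≤ μ₁ ψ) ∧
      (∀ (c : I) (φ : Fin 3 → I), μ₁ (fun x => c * φ x) = c * μ₁ φ) ∧
      (∀ (c : I) (φ : Fin 3 → I), μ₁ (fun x => c ⊔ φ x) = c ⊔ μ₁ φ) ∧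
      (∃ φ ψ : Fin 3 → I, Comonotone φ ψ ∧
        μ₁ (fun x => φ x ⊔ ψ x) ≠ μ₁ φ ⊔ μ₁ ψ) := by
  refine ⟨fun φ => φ 1 ⊓ ((⟨1/2, by norm_num⟩ : I) * φ 2 ⊔ φ 0), ?_, ?_, ?_, ?_⟩
  · intro φ ψ hle
    have h1 := Subtype.coe_le_coe.mpr (hle 1)
    have h2 := Subtype.coe_le_coe.mpr (hle 2)
    have h0 := Subtype.coe_le_coe.mpr (hle 0)
    rw [← Subtype.coe_le_coe]
    show min (φ 1 : ℝ) (max ((1/2:ℝ) * φ 2) (φ 0)) ≤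
      min (ψ 1 : ℝ) (max ((1/2:ℝ) * ψ 2) (ψ 0))
    exact min_le_min h1 (max_le_max (by linarith) h0)
  · intro c φ
    apply Subtype.ext
    show min ((c:ℝ) * φ 1) (max ((1/2:ℝ) * ((c:ℝ) * φ 2)) ((c:ℝ) * φ 0)) =
      (c:ℝ) * min (φ 1 : ℝ) (max ((1/2:ℝ) * φ 2) (φ 0))
    have hc : (0:ℝ) ≤ c := c.2.1
    rw [mul_min_of_nonneg _ _ hc, mul_max_of_nonneg _ _ hc, mul_left_comm]
  · intro c φ
    apply Subtype.ext
    show min (max (c:ℝ) (φ 1)) (max ((1/2:ℝ) * max (c:ℝ) (φ 2)) (max (c:ℝ) (φ 0))) =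
      max (c:ℝ) (min (φ 1 : ℝ) (max ((1/2:ℝ) * φ 2) (φ 0)))
    have hc : (0:ℝ) ≤ c := c.2.1
    have key : max ((1/2:ℝ) * max (c:ℝ) (φ 2)) (max (c:ℝ) (φ 0)) =
        max (c:ℝ) (max ((1/2:ℝ) * φ 2) (φ 0)) := by
      rw [mul_max_of_nonneg _ _ (by norm_num : (0:ℝ) ≤ 1/2), max_assoc,
        max_left_comm ((1/2:ℝ) * φ 2)]
      exact max_eq_right (le_max_of_le_left (by linarith))
    rw [key, ← max_min_distrib_left]
  · refine ⟨fun x => if x = 0 then ⟨0, by norm_num⟩ else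
        if x = 1 then ⟨1/2, by norm_num⟩ else ⟨2/3, by norm_num⟩,
      fun x => if x = 2 then ⟨1, by norm_num⟩ else ⟨1/3, by norm_num⟩, ?_, ?_⟩
    · intro x y
      fin_cases x <;> fin_cases y <;> norm_num [Fin.ext_iff]
    · intro hcon
      have H := congrArg Subtype.val hcon
      revert H
      show min (max (1/2:ℝ) (1/3)) (max ((1/2:ℝ) * max (2/3:ℝ) 1) (max (0:ℝ) (1/3))) =
        max (min (1/2:ℝ) (max ((1/2:ℝ)*(2/3)) 0))
            (min (1/3:ℝ) (max ((1/2:ℝ)*1) (1/3))) → False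
      norm_num
end
end

section
/- Let X be a compact Hausdorff space, ∗ a continuous t-norm, and ν an upper-semicontinuous normed capacity on X. Define the t-normed integral I(φ) = max{ν(φ⁻¹([t,1])) ∗ t : t ∈ [0,1]} for φ ∈ C(X,[0,1]). Then I satisfies: (1) I(1_X) = 1; (2) I(φ ∨ ψ) = I(φ) ∨ I(ψ) for all comonotone φ, ψ; (3) I(c ∗ φ) = c ∗ I(φ) for every c ∈ [0,1] and φ ∈ C(X,[0,1]), where (c ∗ φ)(x) = c ∗ φ(x). -/
/-!
The integral is a maximum over levels `t`, so each identity reduces to comparing superlevel sets.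
Comonotone functions have nested superlevel sets at every level, so a superlevel set of `φ ∨ ψ`
is one of those of `φ` or of `ψ`. For `c ∗ φ`, the superlevel set at `s` is contained in the
superlevel set of `φ` at the least `t` with `s ≤ c ∗ t` (it exists since `[0,1]` is compact and
`∗` is continuous), and conversely `φ_t ⊆ (c ∗ φ)_{c ∗ t}`.
-/

open unitInterval

noncomputable section

/-- A continuous t-norm on `[0,1]`. -/
structure Tnorm where
  op : I → I → I
  cont : Continuous fun p : I × I => op p.1 p.2
  assoc : ∀ a b c, op (op a b) c = op a (op b c)
  comm : ∀ a b, op a b = op b a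
  mono : ∀ ⦃a b c d⦄, a ≤ b → c ≤ d → op a c ≤ op b d
  op_one : ∀ s, op s 1 = s
/-- The map `x ↦ c ∗ f x` for a t-norm `∗`. -/
def tMul {X : Type*} [TopologicalSpace X] (T : Tnorm) (c : I) (f : C(X, I)) : C(X, I) :=
  ⟨fun x => T.op c (f x), T.cont.comp (continuous_const.prodMk f.continuous)⟩
/-- An upper-semicontinuous normed capacity on a topological space,
defined on the closed subsets. -/
structure Capacity (X : Type*) [TopologicalSpace X] where
  ν : {F : Set X // IsClosed F} → I
  normed : ν ⟨Set.univ, isClosed_univ⟩ = 1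
  empty : ν ⟨∅, isClosed_empty⟩ = 0
  mono : ∀ F G : {F : Set X // IsClosed F}, F.1 ⊆ G.1 → ν F ≤ ν G
  usc : ∀ (F : {F : Set X // IsClosed F}) (a : I), ν F < a →
    ∃ O : Set X, IsOpen O ∧ F.1 ⊆ O ∧
      ∀ B : {F : Set X // IsClosed F}, IsCompact B.1 → B.1 ⊆ O → ν B < a

/-- The (closed) superlevel set `φ⁻¹([t,1])` of a continuous `[0,1]`-valued map. -/
def superLevel {X : Type*} [TopologicalSpace X] (f : C(X, I)) (t : I) :
    {F : Set X // IsClosed F} :=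
  ⟨{x | t ≤ f x}, isClosed_le continuous_const f.continuous⟩

namespace Tnorm

variable (T : Tnorm)

lemma zero_op (a : I) : T.op 0 a = 0 :=
  le_antisymm ((T.mono le_rfl le_one').trans_eq (T.op_one 0)) bot_le

lemma left_comm (a b c : I) : T.op a (T.op b c) = T.op b (T.op a c) := by
  rw [← T.assoc, T.comm a b, T.assoc]

lemma continuous_op_left (c : I) : Continuous (T.op c) :=
  T.cont.comp (continuous_const.prodMk continuous_id)

end Tnorm

section SuperLevel

variable {X : Type*} [TopologicalSpace X]

lemma superLevel_const_one_one : superLevel (ContinuousMap.const X 1) 1 = ⟨Set.univ, isClosed_univ⟩ :=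
  Subtype.ext (Set.eq_univ_of_forall fun _ => show (1 : I) ≤ 1 from le_rfl)

lemma superLevel_subset_of_le {φ ψ : C(X, I)} (h : ∀ x, φ x ≤ ψ x) (t : I) :
    (superLevel φ t).1 ⊆ (superLevel ψ t).1 :=
  fun x hx => le_trans hx (h x)

lemma superLevel_fSup (φ ψ : C(X, I)) (t : I) :
    (superLevel (fSup φ ψ) t).1 = (superLevel φ t).1 ∪ (superLevel ψ t).1 := by
  ext x
  exact le_sup_iff (a := t) (b := φ x) (c := ψ x)

lemma Comonotone.superLevel_subset_or {φ ψ : C(X, I)} (h : Comonotone φ ψ) (t : I) :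
    (superLevel φ t).1 ⊆ (superLevel ψ t).1 ∨ (superLevel ψ t).1 ⊆ (superLevel φ t).1 := by
  by_contra! hne
  obtain ⟨x, hφx, hψx⟩ := Set.not_subset.mp hne.1
  obtain ⟨y, hψy, hφy⟩ := Set.not_subset.mp hne.2
  have hφ : (φ y : ℝ) < t := lt_of_not_ge hφy
  have hψ : (ψ x : ℝ) < t := lt_of_not_ge hψx
  have hφ' : (t : ℝ) ≤ φ x := hφx
  have hψ' : (t : ℝ) ≤ ψ y := hψy
  nlinarith [h x y]

lemma Comonotone.superLevel_fSup_eq_or {φ ψ : C(X, I)} (h : Comonotone φ ψ) (t : I) :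
    superLevel (fSup φ ψ) t = superLevel φ t ∨ superLevel (fSup φ ψ) t = superLevel ψ t := by
  rcases h.superLevel_subset_or t with hsub | hsub
  · exact Or.inr (Subtype.ext ((superLevel_fSup φ ψ t).trans (Set.union_eq_right.mpr hsub)))
  · exact Or.inl (Subtype.ext ((superLevel_fSup φ ψ t).trans (Set.union_eq_left.mpr hsub)))

lemma superLevel_subset_tMul (T : Tnorm) (c : I) (φ : C(X, I)) (t : I) :
    (superLevel φ t).1 ⊆ (superLevel (tMul T c φ) (T.op c t)).1 :=
  fun _ hx => T.mono le_rfl hx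

lemma superLevel_tMul_subset_of_isLeast {T : Tnorm} {c s t₀ : I} (φ : C(X, I))
    (ht₀ : IsLeast {t | s ≤ T.op c t} t₀) :
    (superLevel (tMul T c φ) s).1 ⊆ (superLevel φ t₀).1 :=
  fun _ hx => ht₀.2 hx

lemma superLevel_tMul_eq_empty {T : Tnorm} {c s : I} (φ : C(X, I))
    (h : ∀ t, T.op c t < s) : (superLevel (tMul T c φ) s).1 = ∅ :=
  Set.eq_empty_of_forall_notMem fun x hx => (h (φ x)).not_ge hx

end SuperLevel

namespace Capacity

variable {X : Type*} [TopologicalSpace X] (ν : Capacity X)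

lemma ν_eq_zero_of_val_eq_empty {F : {F : Set X // IsClosed F}} (h : F.1 = ∅) : ν.ν F = 0 :=
  le_antisymm ((ν.mono _ _ h.le).trans_eq ν.empty) bot_le

/-- The set whose maximum is the t-normed integral of `φ`. -/
def integrandRange (T : Tnorm) (φ : C(X, I)) : Set I :=
  {y | ∃ t : I, y = T.op (ν.ν (superLevel φ t)) t}

variable {ν} {T : Tnorm} {φ ψ : C(X, I)} {j k l : I}

lemma le_of_isGreatest (h : IsGreatest (ν.integrandRange T φ) j) (t : I) :
    T.op (ν.ν (superLevel φ t)) t ≤ j :=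
  h.2 ⟨t, rfl⟩

lemma isGreatest_le_iff (h : IsGreatest (ν.integrandRange T φ) j) {a : I} :
    j ≤ a ↔ ∀ t, T.op (ν.ν (superLevel φ t)) t ≤ a := by
  rw [isLUB_le_iff h.isLUB]
  exact ⟨fun ha t => ha ⟨t, rfl⟩, by rintro ha _ ⟨t, rfl⟩; exact ha t⟩

lemma isGreatest_mono (hφψ : ∀ x, φ x ≤ ψ x) (hj : IsGreatest (ν.integrandRange T φ) j)
    (hk : IsGreatest (ν.integrandRange T ψ) k) : j ≤ k :=
  (isGreatest_le_iff hj).mpr fun t =>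
    (T.mono (ν.mono _ _ (superLevel_subset_of_le hφψ t)) le_rfl).trans (le_of_isGreatest hk t)

lemma isGreatest_const_one (h : IsGreatest (ν.integrandRange T (ContinuousMap.const X 1)) j) :
    j = 1 := by
  refine le_antisymm le_top ?_
  have := le_of_isGreatest h 1
  rwa [superLevel_const_one_one, ν.normed, T.op_one] at this

lemma isGreatest_fSup (hc : Comonotone φ ψ) (hj : IsGreatest (ν.integrandRange T φ) j)
    (hk : IsGreatest (ν.integrandRange T ψ) k) (hl : IsGreatest (ν.integrandRange T (fSup φ ψ)) l) :
    l = j ⊔ k := by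
  refine le_antisymm ((isGreatest_le_iff hl).mpr fun t => ?_) (sup_le ?_ ?_)
  · rcases hc.superLevel_fSup_eq_or t with h | h <;> rw [h]
    · exact le_sup_of_le_left (le_of_isGreatest hj t)
    · exact le_sup_of_le_right (le_of_isGreatest hk t)
  · exact isGreatest_mono (fun _ => le_sup_left) hj hl
  · exact isGreatest_mono (fun _ => le_sup_right) hk hl

lemma isGreatest_tMul (c : I) (hj : IsGreatest (ν.integrandRange T φ) j)
    (hl : IsGreatest (ν.integrandRange T (tMul T c φ)) l) : l = T.op c j := by
  refine le_antisymm ((isGreatest_le_iff hl).mpr fun s => ?_) ?_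
  · by_cases hS : {t | s ≤ T.op c t}.Nonempty
    · obtain ⟨t₀, ht₀⟩ :=
        (isClosed_le continuous_const (T.continuous_op_left c)).isCompact.exists_isLeast hS
      calc T.op (ν.ν (superLevel (tMul T c φ) s)) s
          ≤ T.op (ν.ν (superLevel φ t₀)) (T.op c t₀) :=
            T.mono (ν.mono _ _ (superLevel_tMul_subset_of_isLeast φ ht₀)) ht₀.1
        _ = T.op c (T.op (ν.ν (superLevel φ t₀)) t₀) := T.left_comm _ _ _
        _ ≤ T.op c j := T.mono le_rfl (le_of_isGreatest hj t₀)
    · have hempty := superLevel_tMul_eq_empty φ fun t => lt_of_not_ge fun ht => hS ⟨t, ht⟩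
      rw [ν.ν_eq_zero_of_val_eq_empty hempty, T.zero_op]
      exact bot_le
  · obtain ⟨t, rfl⟩ := hj.1
    calc T.op c (T.op (ν.ν (superLevel φ t)) t)
        = T.op (ν.ν (superLevel φ t)) (T.op c t) := T.left_comm _ _ _
      _ ≤ T.op (ν.ν (superLevel (tMul T c φ) (T.op c t))) (T.op c t) :=
          T.mono (ν.mono _ _ (superLevel_subset_tMul T c φ t)) le_rfl
      _ ≤ l := le_of_isGreatest hl _

end Capacity

open Capacity in
theorem tnormed_integral_properties_general {X : Type*} [TopologicalSpace X]
    (T : Tnorm) (ν : Capacity X) (J : C(X, I) → I)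
    (hJ : ∀ φ : C(X, I), IsGreatest {y | ∃ t : I, y = T.op (ν.ν (superLevel φ t)) t} (J φ)) :
    J (ContinuousMap.const X 1) = 1 ∧
    (∀ φ ψ : C(X, I), Comonotone (⇑φ) (⇑ψ) → J (fSup φ ψ) = J φ ⊔ J ψ) ∧
    (∀ (c : I) (φ : C(X, I)), J (tMul T c φ) = T.op c (J φ)) :=
  ⟨isGreatest_const_one (hJ _),
    fun φ ψ hc => isGreatest_fSup hc (hJ φ) (hJ ψ) (hJ _),
    fun c φ => isGreatest_tMul c (hJ φ) (hJ _)⟩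

/-- The t-normed integral `I(φ) = max{ν(φ_t) ∗ t : t ∈ [0,1]}` with respect to a capacity
is normed, preserves `∨` on comonotone functions, and is `∗`-homogeneous. -/
theorem tnormed_integral_properties {X : Type*} [TopologicalSpace X] [CompactSpace X]
    [T2Space X] (T : Tnorm) (ν : Capacity X) (J : C(X, I) → I)
    (hJ : ∀ φ : C(X, I), IsGreatest {y | ∃ t : I, y = T.op (ν.ν (superLevel φ t)) t} (J φ)) :
    J (ContinuousMap.const X 1) = 1 ∧
    (∀ φ ψ : C(X, I), Comonotone (⇑φ) (⇑ψ) → J (fSup φ ψ) = J φ ⊔ J ψ) ∧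
    (∀ (c : I) (φ : C(X, I)), J (tMul T c φ) = T.op c (J φ)) :=
  tnormed_integral_properties_general T ν J hJ
end
end

section
/- Let X be a compact Hausdorff space, ∗ a continuous t-norm, and I : C(X,[0,1]) → [0,1] a functional with I(1_X) = 1, preserving ∨ on comonotone functions, and ∗-homogeneous (I(c ∗ φ) = c ∗ I(φ) for c ∈ [0,1]). Define ν(A) = inf{I(φ) : φ ∈ C(X,[0,1]), φ ≡ 1 on A} for nonempty closed A ⊆ X and ν(∅) = 0. Then ν is an upper-semicontinuous capacity on X: ν(X) = 1, ν is monotone on closed sets, and whenever ν(A) < a there is an open set O ⊇ A with ν(K) < a for every compact K ⊆ O. -/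
open unitInterval

noncomputable section

instance : Fact ((0 : ℝ) ≤ 1) := ⟨zero_le_one⟩

/-! Monotonicity and `ν X = 1` are read off the infimum. For upper semicontinuity, take `φ ≡ 1`
on `A` with `J φ < a` and, by continuity of `∗` at `1`, some `c < 1` with `J φ < c ∗ a`. Every
compact `K ⊆ O := {φ > c}` carries a `ψ ≡ 1` on `K` with `c ∗ ψ ≤ φ` and `c ∗ ψ` comonotone
with `φ`; maxitivity and homogeneity give `c ∗ J ψ ≤ J φ < c ∗ a`, hence `ν K ≤ J ψ < a`. -/

namespace Tnorm

variable (T : Tnorm)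

lemma op_le_left (c t : I) : T.op c t ≤ c := by
  simpa only [T.op_one] using T.mono le_rfl (le_one' (t := t))

lemma op_zero (c : I) : T.op c 0 = 0 :=
  le_antisymm ((T.mono le_one' le_rfl).trans_eq (by rw [T.comm, T.op_one])) nonneg'

/-- Continuity of `∗` at `1` in its first argument. -/
lemma exists_lt_one_lt_op {b a : I} (hba : b < a) : ∃ c : I, c < 1 ∧ b < T.op c a := by
  have hU : IsOpen {t : I | b < T.op t a} :=
    isOpen_lt continuous_const (T.cont.comp (continuous_id.prodMk continuous_const))
  have h1U : (1 : I) ∈ {t : I | b < T.op t a} := by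
    simpa only [Set.mem_ofPred_eq, T.comm 1, T.op_one] using hba
  obtain ⟨l, hl, hlU⟩ := exists_Ioc_subset_of_mem_nhds (hU.mem_nhds h1U) ⟨0, zero_lt_one⟩
  obtain ⟨c, hlc, hc1⟩ := exists_between hl
  exact ⟨c, hc1, hlU ⟨hlc, hc1.le⟩⟩

end Tnorm

lemma comonotone_of_forall_le_imp_le {X : Type*} {f g : X → I}
    (h : ∀ x y, f x ≤ f y → g x ≤ g y) : Comonotone f g := by
  intro x y
  rcases le_total (f x) (f y) with hxy | hyx
  · exact mul_nonneg_of_nonpos_of_nonpos (sub_nonpos.2 hxy) (sub_nonpos.2 (h x y hxy))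
  · exact mul_nonneg (sub_nonneg.2 hyx) (sub_nonneg.2 (h y x hyx))

section Functional

variable {X : Type*} [TopologicalSpace X] {J : C(X, I) → I}

lemma le_of_comonotone_of_le
    (hmax : ∀ φ ψ : C(X, I), Comonotone (⇑φ) (⇑ψ) → J (fSup φ ψ) = J φ ⊔ J ψ)
    {φ ψ : C(X, I)} (hc : Comonotone (⇑φ) (⇑ψ)) (hle : ∀ x, ψ x ≤ φ x) : J ψ ≤ J φ := by
  have hsup : fSup φ ψ = φ := ContinuousMap.ext fun x => sup_eq_left.2 (hle x)
  calc J ψ ≤ J φ ⊔ J ψ := le_sup_right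
    _ = J φ := by rw [← hmax φ ψ hc, hsup]

end Functional

section Ramp

variable {X : Type*} [TopologicalSpace X]

def ramp (c m : ℝ) (φ : C(X, I)) : C(X, I) :=
  ⟨fun x => Set.projIcc 0 1 zero_le_one (((φ x : ℝ) - c) / (m - c)), by fun_prop⟩

variable {c m : ℝ} {φ : C(X, I)}

lemma ramp_eq_one (hcm : c < m) {x : X} (hx : m ≤ φ x) : ramp c m φ x = 1 :=
  Set.projIcc_of_right_le zero_le_one ((one_le_div (sub_pos.2 hcm)).2 (by linarith))

lemma ramp_eq_zero (hcm : c < m) {x : X} (hx : (φ x : ℝ) ≤ c) : ramp c m φ x = 0 :=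
  Set.projIcc_of_le_left zero_le_one (div_nonpos_of_nonpos_of_nonneg (by linarith) (by linarith))

lemma ramp_le_ramp (hcm : c < m) {x y : X} (hxy : φ x ≤ φ y) :
    ramp c m φ x ≤ ramp c m φ y :=
  Set.monotone_projIcc zero_le_one
    (div_le_div_of_nonneg_right (sub_le_sub_right (Subtype.coe_le_coe.2 hxy) _)
      (sub_pos.2 hcm).le)

end Ramp

/-- `ψ` is the ramp of `φ` from `c` up to `min_K φ`. -/
lemma exists_eq_one_on_op_le {X : Type*} [TopologicalSpace X] {J : C(X, I) → I} (T : Tnorm)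
    (hmax : ∀ φ ψ : C(X, I), Comonotone (⇑φ) (⇑ψ) → J (fSup φ ψ) = J φ ⊔ J ψ)
    (hhom : ∀ (c : I) (φ : C(X, I)), J (tMul T c φ) = T.op c (J φ))
    {φ : C(X, I)} {c : I} {K : Set X} (hK : IsCompact K) (hKne : K.Nonempty)
    (hcK : ∀ x ∈ K, c < φ x) :
    ∃ ψ : C(X, I), (∀ x ∈ K, ψ x = 1) ∧ T.op c (J ψ) ≤ J φ := by
  obtain ⟨x₀, hx₀K, hx₀⟩ := hK.exists_isMinOn hKne φ.continuous.continuousOn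
  have hcm : (c : ℝ) < φ x₀ := hcK x₀ hx₀K
  set ψ := ramp c (φ x₀) φ
  have hψ_le : ∀ x, T.op c (ψ x) ≤ φ x := fun x => by
    rcases le_or_gt (φ x : ℝ) c with hx | hx
    · rw [ramp_eq_zero hcm hx, T.op_zero]
      exact nonneg'
    · exact (T.op_le_left c _).trans hx.le
  have hcom : Comonotone (⇑φ) (⇑(tMul T c ψ)) :=
    comonotone_of_forall_le_imp_le fun x y hxy => T.mono le_rfl (ramp_le_ramp hcm hxy)
  refine ⟨ψ, fun x hx => ramp_eq_one hcm (Subtype.coe_le_coe.2 (hx₀ hx)), ?_⟩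
  rw [← hhom]
  exact le_of_comonotone_of_le hmax hcom hψ_le

theorem induced_set_function_is_capacity_general {X : Type*} [TopologicalSpace X]
    [Nonempty X] (T : Tnorm) (J : C(X, I) → I)
    (hone : J (ContinuousMap.const X 1) = 1)
    (hmax : ∀ φ ψ : C(X, I), Comonotone (⇑φ) (⇑ψ) → J (fSup φ ψ) = J φ ⊔ J ψ)
    (hhom : ∀ (c : I) (φ : C(X, I)), J (tMul T c φ) = T.op c (J φ))
    (ν : {F : Set X // IsClosed F} → I)
    (hν : ∀ A : {F : Set X // IsClosed F},
      (A.1.Nonempty → ν A = sInf {y | ∃ φ : C(X, I), (∀ a ∈ A.1, φ a = 1) ∧ y = J φ}) ∧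
      (A.1 = ∅ → ν A = 0)) :
    ν ⟨Set.univ, isClosed_univ⟩ = 1 ∧
    (∀ A B : {F : Set X // IsClosed F}, A.1 ⊆ B.1 → ν A ≤ ν B) ∧
    (∀ (A : {F : Set X // IsClosed F}) (a : I), ν A < a →
      ∃ O : Set X, IsOpen O ∧ A.1 ⊆ O ∧
        ∀ K : {F : Set X // IsClosed F}, IsCompact K.1 → K.1 ⊆ O → ν K < a) := by
  refine ⟨?_, fun A B hAB => ?_, fun A a hA => ?_⟩
  · rw [(hν _).1 Set.univ_nonempty]
    refine le_antisymm (sInf_le ⟨_, fun _ _ => rfl, hone.symm⟩) (le_sInf ?_)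
    rintro _ ⟨φ, hφ, rfl⟩
    rw [show φ = ContinuousMap.const X 1 from ContinuousMap.ext fun x => hφ x trivial, hone]
  · rcases A.1.eq_empty_or_nonempty with hAe | hAne
    · exact (hν A).2 hAe ▸ nonneg'
    rw [(hν A).1 hAne, (hν B).1 (hAne.mono hAB)]
    exact sInf_le_sInf fun _ ⟨φ, hφ, hy⟩ => ⟨φ, fun x hx => hφ x (hAB hx), hy⟩
  rcases A.1.eq_empty_or_nonempty with hAe | hAne
  · refine ⟨∅, isOpen_empty, hAe.le, fun K _ hK => ?_⟩
    rwa [(hν K).2 (Set.subset_empty_iff.1 hK), ← (hν A).2 hAe]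
  rw [(hν A).1 hAne, sInf_lt_iff] at hA
  obtain ⟨_, ⟨φ, hφA, rfl⟩, hφa⟩ := hA
  obtain ⟨c, hc1, hca⟩ := T.exists_lt_one_lt_op hφa
  refine ⟨{x | c < φ x}, isOpen_lt continuous_const φ.continuous,
    fun x hx => show c < φ x from (hφA x hx).symm ▸ hc1, fun K hK hKO => ?_⟩
  rcases K.1.eq_empty_or_nonempty with hKe | hKne
  · exact (hν K).2 hKe ▸ nonneg'.trans_lt hφa
  obtain ⟨ψ, hψK, hψφ⟩ := exists_eq_one_on_op_le T hmax hhom hK hKne hKO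
  rw [(hν K).1 hKne]
  refine lt_of_le_of_lt (sInf_le ⟨ψ, hψK, rfl⟩) (lt_of_not_ge fun haψ => ?_)
  exact (hca.trans_le ((T.mono le_rfl haψ).trans hψφ)).false

/-- The set function `ν(A) = inf{I(φ) : φ ≡ 1 on A}` (and `ν(∅) = 0`) associated with a
normed, comonotonically maxitive, `∗`-homogeneous functional is an
upper-semicontinuous capacity. -/
theorem induced_set_function_is_capacity {X : Type*} [TopologicalSpace X] [CompactSpace X]
    [T2Space X] [Nonempty X] (T : Tnorm) (J : C(X, I) → I)
    (hone : J (ContinuousMap.const X 1) = 1)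
    (hmax : ∀ φ ψ : C(X, I), Comonotone (⇑φ) (⇑ψ) → J (fSup φ ψ) = J φ ⊔ J ψ)
    (hhom : ∀ (c : I) (φ : C(X, I)), J (tMul T c φ) = T.op c (J φ))
    (ν : {F : Set X // IsClosed F} → I)
    (hν : ∀ A : {F : Set X // IsClosed F},
      (A.1.Nonempty → ν A = sInf {y | ∃ φ : C(X, I), (∀ a ∈ A.1, φ a = 1) ∧ y = J φ}) ∧
      (A.1 = ∅ → ν A = 0)) :
    ν ⟨Set.univ, isClosed_univ⟩ = 1 ∧
    (∀ A B : {F : Set X // IsClosed F}, A.1 ⊆ B.1 → ν A ≤ ν B) ∧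
    (∀ (A : {F : Set X // IsClosed F}) (a : I), ν A < a →
      ∃ O : Set X, IsOpen O ∧ A.1 ⊆ O ∧
        ∀ K : {F : Set X // IsClosed F}, IsCompact K.1 → K.1 ⊆ O → ν K < a) :=
  induced_set_function_is_capacity_general T J hone hmax hhom ν hν
end
end

section
/- Let X be a compact Hausdorff space. A functional μ : C(X,[0,1]) → [0,1] is ∨-homogeneous (μ(c ∨ φ) = c ∨ μ(φ)) and ∧-homogeneous (μ(c ∧ φ) = c ∧ μ(φ)) for all c ∈ [0,1] if and only if there exists a unique upper-semicontinuous normed capacity ν on X such that μ is the Sugeno integral with respect to ν: μ(φ) = max{ν(φ⁻¹([t,1])) ∧ t : t ∈ [0,1]}. -/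
open unitInterval

noncomputable section

/-! ### Auxiliary material -/

section Aux

variable {X : Type*} [TopologicalSpace X]

/-- The constant function. -/
def konst (c : I) : C(X, I) := ⟨fun _ => c, continuous_const⟩

variable {μ : C(X, I) → I}

lemma mu_konst
    (hsup : ∀ (c : I) (φ : C(X, I)), μ (cSup c φ) = c ⊔ μ φ)
    (hinf : ∀ (c : I) (φ : C(X, I)), μ (cInf c φ) = c ⊓ μ φ)
    (c : I) : μ (konst c) = c := by
  have h0 : μ (konst (0 : I)) = 0 := by
    have e : (konst (0 : I) : C(X, I)) = cInf 0 (konst 1) := by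
      refine ContinuousMap.ext fun x => ?_; show (0 : I) = 0 ⊓ 1; simp
    rw [e, hinf]; simp
  have e : (konst c : C(X, I)) = cSup c (konst 0) := by
    refine ContinuousMap.ext fun x => ?_; show c = c ⊔ 0; simp
  rw [e, hsup, h0]; simp

lemma mu_mono
    (hsup : ∀ (c : I) (φ : C(X, I)), μ (cSup c φ) = c ⊔ μ φ)
    (hinf : ∀ (c : I) (φ : C(X, I)), μ (cInf c φ) = c ⊓ μ φ)
    {φ ψ : C(X, I)} (h : ∀ x, φ x ≤ ψ x) : μ φ ≤ μ ψ := by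
  by_contra hc
  push_neg at hc
  obtain ⟨m, hm1, hm2⟩ := exists_between hc
  set ω : C(X, I) := fSup φ (cInf m ψ) with hω
  have e1 : cSup m ω = cSup m φ := by
    refine ContinuousMap.ext fun x => ?_
    show m ⊔ (φ x ⊔ (m ⊓ ψ x)) = m ⊔ φ x
    rw [sup_left_comm, sup_inf_self, sup_comm]
  have e2 : cInf m ω = cInf m ψ := by
    refine ContinuousMap.ext fun x => ?_
    show m ⊓ (φ x ⊔ (m ⊓ ψ x)) = m ⊓ ψ x
    rw [inf_sup_left, ← inf_assoc, inf_idem]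
    exact sup_eq_right.mpr (inf_le_inf_left _ (h x))
  have E1 : m ⊔ μ ω = m ⊔ μ φ := by rw [← hsup m ω, ← hsup m φ, e1]
  have E2 : m ⊓ μ ω = m ⊓ μ ψ := by rw [← hinf m ω, ← hinf m ψ, e2]
  have hωφ : μ ω = μ φ := by
    rw [sup_eq_right.mpr hm2.le] at E1
    rcases le_total (μ ω) m with hle | hge
    · rw [sup_eq_left.mpr hle] at E1; exact absurd E1 hm2.ne
    · rw [sup_eq_right.mpr hge] at E1; exact E1
  have hωψ : μ ω = μ ψ := by
    rw [inf_eq_right.mpr hm1.le] at E2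
    rcases le_total m (μ ω) with hle | hge
    · rw [inf_eq_left.mpr hle] at E2; exact absurd E2 hm1.ne'
    · rw [inf_eq_right.mpr hge] at E2; exact E2
  exact hc.ne' (hωφ.symm.trans hωψ)

/-- The defining set for the constructed capacity: values of `μ` on functions that are
`1` on an open neighborhood of `F`. -/
def capSet (μ : C(X, I) → I) (F : Set X) : Set ℝ :=
  {y | ∃ η : C(X, I), (∃ U : Set X, IsOpen U ∧ F ⊆ U ∧ ∀ x ∈ U, η x = 1) ∧ y = (μ η : ℝ)}

lemma capSet_nonempty (μ : C(X, I) → I) (F : Set X) : (capSet μ F).Nonempty :=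
  ⟨(μ (konst 1) : ℝ), konst 1, ⟨Set.univ, isOpen_univ, Set.subset_univ _, fun _ _ => rfl⟩, rfl⟩

lemma capSet_bdd (μ : C(X, I) → I) (F : Set X) : BddBelow (capSet μ F) := by
  refine ⟨0, ?_⟩
  rintro y ⟨η, -, rfl⟩
  exact (μ η).2.1

/-- The constructed set function. -/
def nuFun (μ : C(X, I) → I) (F : Set X) : I :=
  ⟨sInf (capSet μ F),
    le_csInf (capSet_nonempty μ F) (by rintro y ⟨η, -, rfl⟩; exact (μ η).2.1),
    le_trans (csInf_le (capSet_bdd μ F)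
      ⟨konst 1, ⟨Set.univ, isOpen_univ, Set.subset_univ _, fun _ _ => rfl⟩, rfl⟩)
      (μ (konst 1)).2.2⟩

lemma nuFun_le {F : Set X} {η : C(X, I)}
    (h : ∃ U : Set X, IsOpen U ∧ F ⊆ U ∧ ∀ x ∈ U, η x = 1) :
    nuFun μ F ≤ μ η := by
  have : sInf (capSet μ F) ≤ (μ η : ℝ) := csInf_le (capSet_bdd μ F) ⟨η, h, rfl⟩
  exact this

lemma le_nuFun {F : Set X} {a : I}
    (h : ∀ η : C(X, I), (∃ U : Set X, IsOpen U ∧ F ⊆ U ∧ ∀ x ∈ U, η x = 1) → a ≤ μ η) :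
    a ≤ nuFun μ F := by
  have : (a : ℝ) ≤ sInf (capSet μ F) := by
    refine le_csInf (capSet_nonempty μ F) ?_
    rintro y ⟨η, hη, rfl⟩
    exact_mod_cast h η hη
  exact this

lemma nuFun_mono {F G : Set X} (h : F ⊆ G) : nuFun μ F ≤ nuFun μ G := by
  refine le_nuFun fun η ⟨U, hU, hGU, h1⟩ => nuFun_le ⟨U, hU, h.trans hGU, h1⟩

lemma nuFun_univ
    (hsup : ∀ (c : I) (φ : C(X, I)), μ (cSup c φ) = c ⊔ μ φ)
    (hinf : ∀ (c : I) (φ : C(X, I)), μ (cInf c φ) = c ⊓ μ φ) :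
    nuFun μ (Set.univ : Set X) = 1 := by
  refine le_antisymm (le_one _) ?_
  refine le_nuFun fun η ⟨U, hU, hGU, h1⟩ => ?_
  have : η = konst 1 := by
    ext x
    exact congrArg Subtype.val (h1 x (hGU (Set.mem_univ x)))
  rw [this, mu_konst hsup hinf]

lemma nuFun_empty
    (hsup : ∀ (c : I) (φ : C(X, I)), μ (cSup c φ) = c ⊔ μ φ)
    (hinf : ∀ (c : I) (φ : C(X, I)), μ (cInf c φ) = c ⊓ μ φ) :
    nuFun μ (∅ : Set X) = 0 := by
  refine le_antisymm ?_ (nonneg _)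
  have := nuFun_le (μ := μ) (F := (∅ : Set X)) (η := konst 0)
    ⟨∅, isOpen_empty, subset_rfl, fun x hx => absurd hx (Set.notMem_empty x)⟩
  rwa [mu_konst hsup hinf] at this

lemma nuFun_lt {F : Set X} {a : I} (hlt : nuFun μ F < a) :
    ∃ η : C(X, I), (∃ U : Set X, IsOpen U ∧ F ⊆ U ∧ ∀ x ∈ U, η x = 1) ∧ μ η < a := by
  by_contra hcon
  push_neg at hcon
  exact absurd (le_nuFun fun η hη => hcon η hη) (not_le.mpr hlt)

/-- The constructed capacity. -/
def theCap (μ : C(X, I) → I)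
    (hsup : ∀ (c : I) (φ : C(X, I)), μ (cSup c φ) = c ⊔ μ φ)
    (hinf : ∀ (c : I) (φ : C(X, I)), μ (cInf c φ) = c ⊓ μ φ) : Capacity X where
  ν := fun F => nuFun μ F.1
  normed := nuFun_univ hsup hinf
  empty := nuFun_empty hsup hinf
  mono := fun F G h => nuFun_mono h
  usc := by
    intro F a hlt
    obtain ⟨η, ⟨U, hU, hFU, h1⟩, hηa⟩ := nuFun_lt hlt
    exact ⟨U, hU, hFU, fun B _ hBU => lt_of_le_of_lt (nuFun_le ⟨U, hU, hBU, h1⟩) hηa⟩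

section Compact

variable [CompactSpace X] [T2Space X]

/-- Upper bound half of the representation. -/
lemma rep_ub
    (hsup : ∀ (c : I) (φ : C(X, I)), μ (cSup c φ) = c ⊔ μ φ)
    (hinf : ∀ (c : I) (φ : C(X, I)), μ (cInf c φ) = c ⊓ μ φ)
    (φ : C(X, I)) (t : I) :
    nuFun μ (superLevel φ t).1 ⊓ t ≤ μ φ := by
  by_contra hcon
  push_neg at hcon
  have hν : μ φ < nuFun μ (superLevel φ t).1 := lt_of_lt_of_le hcon inf_le_left
  have ht : μ φ < t := lt_of_lt_of_le hcon inf_le_right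
  obtain ⟨s, hs1, hs2⟩ := exists_between ht
  have hFU : (superLevel φ t).1 ⊆ {x | s < φ x} := fun x hx => lt_of_lt_of_le hs2 hx
  have hUopen : IsOpen {x | s < φ x} := isOpen_lt continuous_const φ.continuous
  obtain ⟨V, hVopen, hFV, hVU⟩ := normal_exists_closure_subset (superLevel φ t).2 hUopen hFU
  obtain ⟨f, hf0, hf1, hf01⟩ := exists_continuous_zero_one_of_isClosed
    hUopen.isClosed_compl isClosed_closure
    (Set.disjoint_left.mpr fun x hxc hxV => hxc (hVU hxV))
  set η : C(X, I) := ⟨fun x => ⟨f x, hf01 x⟩, (map_continuous f).subtype_mk _⟩ with hη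
  have hνη : nuFun μ (superLevel φ t).1 ≤ μ η :=
    nuFun_le ⟨V, hVopen, hFV, fun x hx => Subtype.ext (hf1 (subset_closure hx))⟩
  have hpt : ∀ x, (cInf s η) x ≤ φ x := by
    intro x
    by_cases hx : x ∈ {x | s < φ x}
    · exact le_trans inf_le_left (le_of_lt hx)
    · have h0 : η x = 0 := Subtype.ext (hf0 hx)
      show s ⊓ η x ≤ φ x
      rw [h0]
      exact le_trans inf_le_right (nonneg _)
  have hmle : μ (cInf s η) ≤ μ φ := mu_mono hsup hinf hpt
  rw [hinf] at hmle
  have hbig : μ φ < s ⊓ μ η := lt_inf_iff.mpr ⟨hs1, lt_of_lt_of_le hν hνη⟩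
  exact absurd hmle (not_le.mpr hbig)

/-- Membership half of the representation. -/
lemma rep_mem
    (hsup : ∀ (c : I) (φ : C(X, I)), μ (cSup c φ) = c ⊔ μ φ)
    (hinf : ∀ (c : I) (φ : C(X, I)), μ (cInf c φ) = c ⊓ μ φ)
    (φ : C(X, I)) :
    μ φ ≤ nuFun μ (superLevel φ (μ φ)).1 := by
  refine le_nuFun fun η ⟨U, hU, hFU, h1⟩ => ?_
  rcases Set.eq_empty_or_nonempty Uᶜ with hK | hK
  · have hUuniv : U = Set.univ := Set.compl_empty_iff.mp hK
    have hη1 : η = konst 1 := ContinuousMap.ext fun x => h1 x (hUuniv ▸ Set.mem_univ x)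
    rw [hη1, mu_konst hsup hinf]
    exact le_one _
  · have hKcomp : IsCompact Uᶜ := hU.isClosed_compl.isCompact
    obtain ⟨x₀, hx₀, hmax⟩ := hKcomp.exists_isMaxOn hK
      ((continuous_subtype_val.comp φ.continuous).continuousOn)
    have hs₀ : φ x₀ < μ φ := by
      by_contra hge
      push_neg at hge
      exact hx₀ (hFU hge)
    have hφle : ∀ x, φ x ≤ (cSup (φ x₀) η) x := by
      intro x
      by_cases hx : x ∈ U
      · show φ x ≤ φ x₀ ⊔ η x
        rw [h1 x hx]
        exact le_trans (le_one _) le_sup_right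
      · show φ x ≤ φ x₀ ⊔ η x
        exact le_trans (Subtype.coe_le_coe.mp (hmax hx)) le_sup_left
    have hmono := mu_mono hsup hinf hφle
    rw [hsup] at hmono
    rcases le_sup_iff.mp hmono with h' | h'
    · exact absurd h' (not_le.mpr hs₀)
    · exact h'

/-- The constructed capacity represents `μ`. -/
lemma theCap_rep
    (hsup : ∀ (c : I) (φ : C(X, I)), μ (cSup c φ) = c ⊔ μ φ)
    (hinf : ∀ (c : I) (φ : C(X, I)), μ (cInf c φ) = c ⊓ μ φ)
    (φ : C(X, I)) :
    IsGreatest {y | ∃ t : I, y = (theCap μ hsup hinf).ν (superLevel φ t) ⊓ t} (μ φ) := by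
  constructor
  · exact ⟨μ φ, (inf_eq_right.mpr (rep_mem hsup hinf φ)).symm⟩
  · rintro y ⟨t, rfl⟩
    exact rep_ub hsup hinf φ t

/-- Any representing capacity is below `μ η` for `η ≡ 1` on `F`. -/
lemma repr_le {ν' : Capacity X}
    (hrep : ∀ φ : C(X, I), IsGreatest {y | ∃ t : I, y = ν'.ν (superLevel φ t) ⊓ t} (μ φ))
    (F : {F : Set X // IsClosed F}) (η : C(X, I)) (h1 : ∀ x ∈ F.1, η x = 1) :
    ν'.ν F ≤ μ η := by
  have hsub : F.1 ⊆ (superLevel η 1).1 := fun x hx => by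
    show (1 : I) ≤ η x
    rw [h1 x hx]
  calc ν'.ν F ≤ ν'.ν (superLevel η 1) := ν'.mono F _ hsub
    _ = ν'.ν (superLevel η 1) ⊓ 1 := (inf_eq_left.mpr le_one').symm
    _ ≤ μ η := (hrep η).2 ⟨1, rfl⟩

/-- For any representing capacity, small values are witnessed by Urysohn functions. -/
lemma repr_exists {ν' : Capacity X}
    (hrep : ∀ φ : C(X, I), IsGreatest {y | ∃ t : I, y = ν'.ν (superLevel φ t) ⊓ t} (μ φ))
    (F : {F : Set X // IsClosed F}) (a : I) (hlt : ν'.ν F < a) :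
    ∃ η : C(X, I), (∀ x ∈ F.1, η x = 1) ∧ μ η < a := by
  obtain ⟨O, hO, hFO, hB⟩ := ν'.usc F a hlt
  obtain ⟨f, hf0, hf1, hf01⟩ := exists_continuous_zero_one_of_isClosed hO.isClosed_compl F.2
    (Set.disjoint_left.mpr fun x hxc hxF => hxc (hFO hxF))
  set η : C(X, I) := ⟨fun x => ⟨f x, hf01 x⟩, (map_continuous f).subtype_mk _⟩ with hη
  refine ⟨η, fun x hx => Subtype.ext (hf1 hx), ?_⟩
  obtain ⟨t₀, ht₀⟩ := (hrep η).1
  rcases eq_or_lt_of_le (nonneg' : (0:I) ≤ t₀) with h0 | h0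
  · rw [ht₀, ← h0, inf_eq_right.mpr (nonneg' : (0:I) ≤ _)]
    exact lt_of_le_of_lt (nonneg' : (0:I) ≤ ν'.ν F) hlt
  · have hsub : (superLevel η t₀).1 ⊆ O := by
      intro x hx
      by_contra hxO
      have he0 : η x = 0 := Subtype.ext (hf0 hxO)
      have hle : t₀ ≤ (0 : I) := he0 ▸ hx
      exact absurd (le_antisymm hle nonneg') h0.ne'
    have hlt' := hB (superLevel η t₀) ((superLevel η t₀).2.isCompact) hsub
    rw [ht₀]
    exact lt_of_le_of_lt inf_le_left hlt'

/-- Uniqueness of the representing capacity. -/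
lemma cap_eq {ν₁ ν₂ : Capacity X}
    (h₁ : ∀ φ : C(X, I), IsGreatest {y | ∃ t : I, y = ν₁.ν (superLevel φ t) ⊓ t} (μ φ))
    (h₂ : ∀ φ : C(X, I), IsGreatest {y | ∃ t : I, y = ν₂.ν (superLevel φ t) ⊓ t} (μ φ)) :
    ν₁ = ν₂ := by
  have key : ∀ (νa νb : Capacity X),
      (∀ φ : C(X, I), IsGreatest {y | ∃ t : I, y = νa.ν (superLevel φ t) ⊓ t} (μ φ)) →
      (∀ φ : C(X, I), IsGreatest {y | ∃ t : I, y = νb.ν (superLevel φ t) ⊓ t} (μ φ)) →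
      ∀ F, νa.ν F ≤ νb.ν F := by
    intro νa νb ha hb F
    by_contra hcon
    push_neg at hcon
    obtain ⟨η, h1, hηa⟩ := repr_exists hb F _ hcon
    exact absurd (repr_le ha F η h1) (not_le.mpr hηa)
  have hν : ν₁.ν = ν₂.ν := funext fun F => le_antisymm (key ν₁ ν₂ h₁ h₂ F) (key ν₂ ν₁ h₂ h₁ F)
  cases ν₁; cases ν₂
  dsimp only at hν
  subst hν
  rfl

/-- Backward direction: `∨`-homogeneity. -/
lemma back_sup {ν : Capacity X}
    (hrep : ∀ φ : C(X, I), IsGreatest {y | ∃ t : I, y = ν.ν (superLevel φ t) ⊓ t} (μ φ))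
    (c : I) (φ : C(X, I)) : μ (cSup c φ) = c ⊔ μ φ := by
  refine le_antisymm ?_ (sup_le ?_ ?_)
  · obtain ⟨t, ht⟩ := (hrep (cSup c φ)).1
    rcases le_or_gt t c with htc | htc
    · rw [ht]
      exact le_sup_of_le_left (le_trans inf_le_right htc)
    · have hset : superLevel (cSup c φ) t = superLevel φ t := by
        apply Subtype.ext
        ext x
        show t ≤ c ⊔ φ x ↔ t ≤ φ x
        constructor
        · intro h
          rcases le_sup_iff.mp h with h' | h'
          · exact absurd h' (not_le.mpr htc)
          · exact h'
        · exact fun h => le_sup_of_le_right h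
      rw [ht, hset]
      exact le_sup_of_le_right ((hrep φ).2 ⟨t, rfl⟩)
  · have hset : superLevel (cSup c φ) c = ⟨Set.univ, isClosed_univ⟩ := by
      apply Subtype.ext
      ext x
      simp only [Set.mem_univ, iff_true]
      show c ≤ c ⊔ φ x
      exact le_sup_left
    have hmem := (hrep (cSup c φ)).2 ⟨c, rfl⟩
    rw [hset, ν.normed, inf_eq_right.mpr (le_one' : c ≤ 1)] at hmem
    exact hmem
  · obtain ⟨t₀, ht₀⟩ := (hrep φ).1
    have hsub : (superLevel φ t₀).1 ⊆ (superLevel (cSup c φ) t₀).1 := fun x hx =>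
      (show t₀ ≤ c ⊔ φ x from le_sup_of_le_right hx)
    calc μ φ = ν.ν (superLevel φ t₀) ⊓ t₀ := ht₀
      _ ≤ ν.ν (superLevel (cSup c φ) t₀) ⊓ t₀ := inf_le_inf_right t₀ (ν.mono _ _ hsub)
      _ ≤ μ (cSup c φ) := (hrep (cSup c φ)).2 ⟨t₀, rfl⟩

/-- Backward direction: `∧`-homogeneity. -/
lemma back_inf {ν : Capacity X}
    (hrep : ∀ φ : C(X, I), IsGreatest {y | ∃ t : I, y = ν.ν (superLevel φ t) ⊓ t} (μ φ))
    (c : I) (φ : C(X, I)) : μ (cInf c φ) = c ⊓ μ φ := by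
  refine le_antisymm ?_ ?_
  · obtain ⟨t, ht⟩ := (hrep (cInf c φ)).1
    rcases le_or_gt t c with htc | htc
    · have hset : superLevel (cInf c φ) t = superLevel φ t := by
        apply Subtype.ext
        ext x
        show t ≤ c ⊓ φ x ↔ t ≤ φ x
        constructor
        · exact fun h => le_trans h inf_le_right
        · exact fun h => le_inf htc h
      rw [ht, hset]
      exact le_inf (le_trans inf_le_right htc) ((hrep φ).2 ⟨t, rfl⟩)
    · have hset : superLevel (cInf c φ) t = ⟨∅, isClosed_empty⟩ := by
        apply Subtype.ext
        ext x
        simp only [Set.mem_empty_iff_false, iff_false]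
        show ¬ t ≤ c ⊓ φ x
        exact not_le.mpr (lt_of_le_of_lt inf_le_left htc)
      rw [ht, hset, ν.empty]
      exact le_trans inf_le_left (le_inf (nonneg' : (0:I) ≤ c) (nonneg' : (0:I) ≤ μ φ))
  · obtain ⟨t₀, ht₀⟩ := (hrep φ).1
    have hsub : (superLevel φ t₀).1 ⊆ (superLevel (cInf c φ) (c ⊓ t₀)).1 := fun x hx =>
      (show c ⊓ t₀ ≤ c ⊓ φ x from inf_le_inf_left c hx)
    have key : c ⊓ μ φ ≤ ν.ν (superLevel (cInf c φ) (c ⊓ t₀)) ⊓ (c ⊓ t₀) := by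
      rw [ht₀]
      refine le_inf (le_trans ?_ (ν.mono _ _ hsub)) ?_
      · exact le_trans inf_le_right inf_le_left
      · exact inf_le_inf_left c inf_le_right
    exact le_trans key ((hrep (cInf c φ)).2 ⟨c ⊓ t₀, rfl⟩)

end Compact

end Aux

/-- Characterization of the Sugeno integral: a functional on `C(X,[0,1])` is
`∨`-homogeneous and `∧`-homogeneous iff it is the Sugeno integral with respect to a
unique upper-semicontinuous capacity. -/
theorem sugeno_integral_characterization {X : Type*} [TopologicalSpace X] [CompactSpace X]
    [T2Space X] [Nonempty X] (μ : C(X, I) → I) :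
    ((∀ (c : I) (φ : C(X, I)), μ (cSup c φ) = c ⊔ μ φ) ∧
     (∀ (c : I) (φ : C(X, I)), μ (cInf c φ) = c ⊓ μ φ)) ↔
    (∃! ν : Capacity X, ∀ φ : C(X, I),
      IsGreatest {y | ∃ t : I, y = ν.ν (superLevel φ t) ⊓ t} (μ φ)) := by
  constructor
  · rintro ⟨hsup, hinf⟩
    exact ⟨theCap μ hsup hinf, theCap_rep hsup hinf,
      fun ν' hν' => cap_eq hν' (theCap_rep hsup hinf)⟩
  · rintro ⟨ν, hrep, -⟩
    exact ⟨fun c φ => back_sup hrep c φ, fun c φ => back_inf hrep c φ⟩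
end
end

section
/- Let X be a finite set with n elements and ∗ a continuous t-norm. A functional μ : [0,1]^n → [0,1] satisfies (1) μ(1_X) = 1, (2) μ(φ ∨ ψ) = μ(φ) ∨ μ(ψ) for all comonotone φ, ψ, and (3) μ(c ∗ χ_A) = c ∗ μ(χ_A) for every c ∈ [0,1] and every subset A ⊆ X (χ_A the characteristic function of A), if and only if there exists a unique normed capacity ν on X such that μ(φ) = max{ν({x : φ(x) ≥ t}) ∗ t : t ∈ [0,1]} for all φ. -/
open unitInterval

noncomputable section

lemma izero_le (t : I) : 0 ≤ t := t.2.1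
lemma ile_one (t : I) : t ≤ 1 := t.2.2
lemma ile_zero {t : I} (h : t ≤ 0) : t = 0 := le_antisymm h (izero_le t)
lemma izero_ne_one : (0 : I) ≠ 1 := fun h => by
  have : (0:ℝ) = 1 := congrArg Subtype.val h
  norm_num at this

lemma Tnorm.zero_op_s14 (T : Tnorm) (x : I) : T.op 0 x = 0 :=
  ile_zero (by simpa [T.op_one] using T.mono (le_refl (0:I)) (ile_one x))
lemma Tnorm.op_zero_s14 (T : Tnorm) (x : I) : T.op x 0 = 0 := by rw [T.comm]; exact T.zero_op_s14 x
lemma Tnorm.one_op (T : Tnorm) (x : I) : T.op 1 x = x := by rw [T.comm]; exact T.op_one x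

lemma comonotone_along {X : Type*} (φ g h : X → I)
    (hg : ∀ x y, φ x ≤ φ y → g x ≤ g y) (hh : ∀ x y, φ x ≤ φ y → h x ≤ h y) :
    Comonotone g h := by
  intro x y
  rcases le_total (φ x) (φ y) with h1 | h1
  · have a1 : (g x : ℝ) ≤ g y := Subtype.coe_le_coe.2 (hg x y h1)
    have a2 : (h x : ℝ) ≤ h y := Subtype.coe_le_coe.2 (hh x y h1)
    nlinarith
  · have a1 : (g y : ℝ) ≤ g x := Subtype.coe_le_coe.2 (hg y x h1)
    have a2 : (h y : ℝ) ≤ h x := Subtype.coe_le_coe.2 (hh y x h1)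
    nlinarith

open scoped Classical in
lemma char_greatest {X : Type*} (T : Tnorm) (ν : Set X → I) (A : Set X) :
    IsGreatest {y | ∃ t : I, y = T.op (ν {x | t ≤ (if x ∈ A then (1:I) else 0)}) t} (ν A) := by
  constructor
  · refine ⟨1, ?_⟩
    have hset : {x : X | (1:I) ≤ (if x ∈ A then (1:I) else 0)} = A := by
      ext x
      by_cases hx : x ∈ A
      · simp [hx]
      · simp only [Set.mem_setOf_eq, hx, if_false, iff_false]
        exact fun h => izero_ne_one (ile_zero h).symm
    rw [hset, T.op_one]
  · rintro y ⟨t, rfl⟩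
    rcases eq_or_ne t 0 with rfl | ht0
    · rw [T.op_zero_s14]; exact izero_le _
    · have hset : {x : X | t ≤ (if x ∈ A then (1:I) else 0)} = A := by
        ext x
        by_cases hx : x ∈ A
        · simp [hx, ile_one t]
        · simp only [Set.mem_setOf_eq, hx, if_false, iff_false]
          exact fun h => ht0 (ile_zero h)
      rw [hset]
      calc T.op (ν A) t ≤ T.op (ν A) 1 := T.mono (le_refl _) (ile_one t)
        _ = ν A := T.op_one _
open scoped Classical in
/-- Characterization of t-normed integrals on a finite set: a functional `μ : [0,1]^X → [0,1]`
is normed, comonotonically maxitive and `∗`-homogeneous on characteristic functions iff it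
is the t-normed integral with respect to a unique normed capacity on `X`. -/
theorem tnormed_integral_characterization_finite {X : Type*} [Fintype X] (T : Tnorm)
    (μ : (X → I) → I) :
    (μ (fun _ => 1) = 1 ∧
     (∀ φ ψ : X → I, Comonotone φ ψ → μ (fun x => φ x ⊔ ψ x) = μ φ ⊔ μ ψ) ∧
     (∀ (c : I) (A : Set X),
       μ (fun x => T.op c (if x ∈ A then 1 else 0)) =
         T.op c (μ (fun x => if x ∈ A then 1 else 0)))) ↔
    (∃! ν : Set X → I,
      (ν ∅ = 0 ∧ ν Set.univ = 1 ∧ ∀ A B : Set X, A ⊆ B → ν A ≤ ν B) ∧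
      ∀ φ : X → I, IsGreatest {y | ∃ t : I, y = T.op (ν {x | t ≤ φ x}) t} (μ φ)) := by
  constructor
  · rintro ⟨h1, h2, h3⟩
    set ν : Set X → I := fun A => μ (fun x => if x ∈ A then (1:I) else 0) with hν
    have μ0 : μ (fun _ => 0) = 0 := by
      have h := h3 0 ∅
      simp only [T.zero_op_s14] at h
      exact h
    have hνE : ν ∅ = 0 := by
      simp only [hν, Set.mem_empty_iff_false, if_false]
      exact μ0
    have hνuniv : ν Set.univ = 1 := by
      simp only [hν, Set.mem_univ, if_true]
      exact h1
    have hmono : ∀ A B : Set X, A ⊆ B → ν A ≤ ν B := by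
      intro A B hAB
      have hcom : Comonotone (fun x => if x ∈ A then (1:I) else 0)
          (fun x => if x ∈ B then (1:I) else 0) := by
        intro x y
        by_cases hx : x ∈ A
        · have hx' : x ∈ B := hAB hx
          by_cases hy : y ∈ A
          · simp [hx, hy, hx', hAB hy]
          · by_cases hyB : y ∈ B <;> simp [hx, hy, hx', hyB]
        · by_cases hy : y ∈ A
          · have hy' : y ∈ B := hAB hy
            by_cases hxB : x ∈ B <;> simp [hx, hy, hy', hxB]
          · simp [hx, hy]
      have hsup : (fun x => (if x ∈ A then (1:I) else 0) ⊔ (if x ∈ B then (1:I) else 0)) =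
          fun x => if x ∈ B then (1:I) else 0 := by
        funext x
        by_cases hx : x ∈ A
        · simp [hx, hAB hx]
        · simp [hx]
      have h2' := h2 _ _ hcom
      rw [hsup] at h2'
      simp only [hν]
      rw [h2']
      exact le_sup_left
    have key : ∀ n : ℕ, ∀ φ : X → I, ((Finset.univ.image φ).erase 0).card ≤ n →
        IsGreatest {y | ∃ t : I, y = T.op (ν {x | t ≤ φ x}) t} (μ φ) := by
      intro n
      induction n with
      | zero =>
        intro φ hcard
        have hall : ∀ x, φ x = 0 := by
          intro x
          by_contra hx
          have hm : φ x ∈ (Finset.univ.image φ).erase 0 :=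
            Finset.mem_erase.2 ⟨hx, Finset.mem_image_of_mem φ (Finset.mem_univ x)⟩
          have := Finset.card_pos.2 ⟨_, hm⟩
          omega
        have hφ : φ = fun _ => 0 := funext hall
        subst hφ
        constructor
        · exact ⟨0, by rw [μ0, T.op_zero_s14]⟩
        · rintro y ⟨t, rfl⟩
          rw [μ0]
          rcases eq_or_ne t 0 with rfl | ht
          · exact le_of_eq (T.op_zero_s14 _)
          · have hempty : {x : X | t ≤ (fun _ : X => (0:I)) x} = ∅ := by
              ext x
              simp only [Set.mem_setOf_eq, Set.mem_empty_iff_false, iff_false]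
              exact fun h => ht (ile_zero h)
            rw [hempty, hνE, T.zero_op_s14]
      | succ n ih =>
        intro φ hcard
        by_cases hsmall : ((Finset.univ.image φ).erase 0).card ≤ n
        · exact ih φ hsmall
        have hFne : ((Finset.univ.image φ).erase 0).Nonempty := by
          rw [← Finset.card_pos]; omega
        set F := (Finset.univ.image φ).erase 0 with hF
        set c := F.min' hFne with hc
        have hcF : c ∈ F := F.min'_mem hFne
        have hc0 : c ≠ 0 := (Finset.mem_erase.1 hcF).1
        have hcmin : ∀ x, φ x ≠ 0 → c ≤ φ x := fun x hx =>
          F.min'_le _ (Finset.mem_erase.2 ⟨hx, Finset.mem_image_of_mem φ (Finset.mem_univ x)⟩)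
        have hcpos : (0:I) < c := lt_of_le_of_ne (izero_le c) (Ne.symm hc0)
        set φ' : X → I := fun x => if c < φ x then φ x else 0 with hφ'
        have hφ'le : ∀ x, φ' x ≤ φ x := by
          intro x; simp only [hφ']
          split
          · exact le_refl _
          · exact izero_le _
        have hφ'ne : ∀ x, φ' x ≠ 0 → c < φ x ∧ φ' x = φ x := by
          intro x hx
          simp only [hφ'] at hx ⊢
          by_cases h : c < φ x
          · exact ⟨h, if_pos h⟩
          · rw [if_neg h] at hx; exact absurd rfl hx
        set g : X → I := fun x => T.op c (if x ∈ {x : X | c ≤ φ x} then 1 else 0) with hg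
        have hgval : ∀ x, g x = if c ≤ φ x then c else 0 := by
          intro x
          simp only [hg, Set.mem_setOf_eq]
          split
          · exact T.op_one c
          · exact T.op_zero_s14 c
        have hdec : (fun x => g x ⊔ φ' x) = φ := by
          funext x
          rw [hgval x]
          simp only [hφ']
          rcases eq_or_ne (φ x) 0 with h0 | h0
          · have hnc : ¬ c ≤ φ x := fun h => hc0 (ile_zero (h0 ▸ h))
            have hnc' : ¬ c < φ x := fun h => hnc h.le
            rw [if_neg hnc, if_neg hnc', h0]
            simp
          · have hcle : c ≤ φ x := hcmin x h0
            rw [if_pos hcle]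
            by_cases hlt : c < φ x
            · rw [if_pos hlt]; exact sup_eq_right.2 hlt.le
            · rw [if_neg hlt]
              have he : φ x = c := le_antisymm (not_lt.1 hlt) hcle
              rw [he]
              exact sup_eq_left.2 (izero_le c)
        have hcom : Comonotone g φ' := by
          refine comonotone_along φ _ _ ?_ ?_
          · intro x y hxy
            rw [hgval x, hgval y]
            by_cases hx : c ≤ φ x
            · rw [if_pos hx, if_pos (le_trans hx hxy)]
            · rw [if_neg hx]; exact izero_le _
          · intro x y hxy
            simp only [hφ']
            by_cases hx : c < φ x
            · rw [if_pos hx, if_pos (lt_of_lt_of_le hx hxy)]; exact hxy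
            · rw [if_neg hx]; exact izero_le _
        have hμφ : μ φ = T.op (ν {x | c ≤ φ x}) c ⊔ μ φ' := by
          have h2' := h2 g φ' hcom
          rw [hdec] at h2'
          rw [h2']
          congr 1
          rw [hg, h3 c {x : X | c ≤ φ x}, T.comm (ν _) c]
        have hcard' : ((Finset.univ.image φ').erase 0).card ≤ n := by
          have hsub : (Finset.univ.image φ').erase 0 ⊆ F.erase c := by
            intro v hv
            rcases Finset.mem_erase.1 hv with ⟨hv0, hvim⟩
            rcases Finset.mem_image.1 hvim with ⟨x, -, rfl⟩
            rcases hφ'ne x hv0 with ⟨hlt, heq⟩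
            refine Finset.mem_erase.2 ⟨?_, ?_⟩
            · rw [heq]; exact ne_of_gt hlt
            · rw [hF, heq]
              exact Finset.mem_erase.2 ⟨(hcpos.trans hlt).ne',
                Finset.mem_image_of_mem φ (Finset.mem_univ x)⟩
          have hle := Finset.card_le_card hsub
          have hE := Finset.card_erase_of_mem hcF
          omega
        have hG' := ih φ' hcard'
        have R1 : ∀ t : I, c < t → {x : X | t ≤ φ' x} = {x | t ≤ φ x} := by
          intro t ht
          ext x
          simp only [Set.mem_setOf_eq]
          constructor
          · exact fun h => le_trans h (hφ'le x)
          · intro h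
            have hlt : c < φ x := lt_of_lt_of_le ht h
            have he : φ' x = φ x := by simp only [hφ']; rw [if_pos hlt]
            rw [he]; exact h
        have R2 : ∀ t : I, t ≠ 0 → t ≤ c → {x : X | t ≤ φ x} = {x | c ≤ φ x} := by
          intro t ht0 htc
          ext x
          simp only [Set.mem_setOf_eq]
          constructor
          · intro h
            apply hcmin x
            intro h0
            rw [h0] at h
            exact ht0 (ile_zero h)
          · exact fun h => le_trans htc h
        have R3 : ∀ t : I, t ≠ 0 → {x : X | t ≤ φ' x} ⊆ {x | c ≤ φ x} := by
          intro t ht0 x hx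
          simp only [Set.mem_setOf_eq] at hx ⊢
          have hne : φ' x ≠ 0 := fun h => ht0 (ile_zero (h ▸ hx))
          exact (hφ'ne x hne).1.le
        constructor
        · rcases hG'.1 with ⟨t1, ht1⟩
          rcases le_total (μ φ') (T.op (ν {x | c ≤ φ x}) c) with hle | hge
          · exact ⟨c, by rw [hμφ, sup_eq_left.2 hle]⟩
          · have hμ : μ φ = μ φ' := by rw [hμφ, sup_eq_right.2 hge]
            rcases eq_or_ne t1 0 with rfl | ht10
            · refine ⟨0, ?_⟩
              rw [hμ, ht1, T.op_zero_s14, T.op_zero_s14]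
            rcases le_or_gt t1 c with htc | hct
            · refine ⟨c, ?_⟩
              have hB : T.op (ν {x | t1 ≤ φ' x}) t1 ≤ T.op (ν {x | c ≤ φ x}) c :=
                T.mono (hmono _ _ (R3 t1 ht10)) htc
              have he : μ φ' = T.op (ν {x | c ≤ φ x}) c :=
                le_antisymm (by rw [ht1]; exact hB) hge
              rw [hμ, he]
            · exact ⟨t1, by rw [hμ, ht1, R1 t1 hct]⟩
        · rintro y ⟨t, rfl⟩
          rcases eq_or_ne t 0 with rfl | ht0
          · rw [T.op_zero_s14]; exact izero_le _
          rcases le_or_gt t c with htc | hct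
          · rw [R2 t ht0 htc, hμφ]
            exact le_sup_of_le_left (T.mono (le_refl _) htc)
          · rw [← R1 t hct, hμφ]
            exact le_sup_of_le_right (hG'.2 ⟨t, rfl⟩)
    refine ⟨ν, ⟨⟨hνE, hνuniv, hmono⟩, fun φ => key _ φ le_rfl⟩, ?_⟩
    rintro ν' ⟨⟨hνEp, hν'u, hmono'⟩, hint'⟩
    funext A
    have hGA := hint' (fun x => if x ∈ A then (1:I) else 0)
    have heq := hGA.unique (char_greatest T ν' A)
    exact heq.symm
  · rintro ⟨ν, ⟨⟨hνE, hνu, hmono⟩, hint⟩, -⟩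
    have hchar : ∀ A : Set X, μ (fun x => if x ∈ A then (1:I) else 0) = ν A := by
      intro A
      exact (hint _).unique (char_greatest T ν A)
    refine ⟨?_, ?_, ?_⟩
    · refine (hint _).unique ⟨⟨1, ?_⟩, ?_⟩
      · have hset : {x : X | (1:I) ≤ (fun _ : X => (1:I)) x} = Set.univ := by
          ext x; simp
        rw [hset, hνu, T.op_one]
      · rintro y ⟨t, rfl⟩
        calc T.op (ν _) t ≤ T.op 1 1 := T.mono (ile_one _) (ile_one _)
          _ = 1 := T.op_one 1
    · intro φ ψ hcom
      have hφG := hint φ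
      have hψG := hint ψ
      have hsG := hint (fun x => φ x ⊔ ψ x)
      apply le_antisymm
      · rcases hsG.1 with ⟨t1, ht1⟩
        have hunion : {x : X | t1 ≤ (fun x => φ x ⊔ ψ x) x} =
            {x | t1 ≤ φ x} ∪ {x | t1 ≤ ψ x} := by
          ext x
          simp [le_sup_iff]
        have hnest : {x : X | t1 ≤ φ x} ⊆ {x | t1 ≤ ψ x} ∨
            {x : X | t1 ≤ ψ x} ⊆ {x | t1 ≤ φ x} := by
          by_contra hcon
          push_neg at hcon
          obtain ⟨h12, h21⟩ := hcon
          obtain ⟨a, ha1, ha2⟩ := Set.not_subset.1 h12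
          obtain ⟨b, hb1, hb2⟩ := Set.not_subset.1 h21
          simp only [Set.mem_setOf_eq] at ha1 ha2 hb1 hb2
          have hφab : (φ b : ℝ) < φ a :=
            Subtype.coe_lt_coe.2 (lt_of_lt_of_le (not_le.1 hb2) ha1)
          have hψab : (ψ a : ℝ) < ψ b :=
            Subtype.coe_lt_coe.2 (lt_of_lt_of_le (not_le.1 ha2) hb1)
          have hc := hcom a b
          nlinarith
        rcases hnest with hn | hn
        · have hset : {x : X | t1 ≤ (fun x => φ x ⊔ ψ x) x} = {x | t1 ≤ ψ x} := by
            rw [hunion]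
            exact Set.union_eq_self_of_subset_left hn
          rw [ht1, hset]
          exact le_sup_of_le_right (hψG.2 ⟨t1, rfl⟩)
        · have hset : {x : X | t1 ≤ (fun x => φ x ⊔ ψ x) x} = {x | t1 ≤ φ x} := by
            rw [hunion]
            exact Set.union_eq_self_of_subset_right hn
          rw [ht1, hset]
          exact le_sup_of_le_left (hφG.2 ⟨t1, rfl⟩)
      · refine sup_le ?_ ?_
        · rcases hφG.1 with ⟨t0, ht0⟩
          rw [ht0]
          refine le_trans (T.mono (hmono _ _ ?_) (le_refl t0)) (hsG.2 ⟨t0, rfl⟩)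
          intro x hx
          simp only [Set.mem_setOf_eq] at hx ⊢
          exact le_trans hx le_sup_left
        · rcases hψG.1 with ⟨t0, ht0⟩
          rw [ht0]
          refine le_trans (T.mono (hmono _ _ ?_) (le_refl t0)) (hsG.2 ⟨t0, rfl⟩)
          intro x hx
          simp only [Set.mem_setOf_eq] at hx ⊢
          exact le_trans hx le_sup_right
    · intro c A
      rw [hchar A]
      have hG : IsGreatest {y | ∃ t : I,
          y = T.op (ν {x | t ≤ T.op c (if x ∈ A then (1:I) else 0)}) t} (T.op c (ν A)) := by
        constructor
        · rcases eq_or_ne c 0 with rfl | hc0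
          · exact ⟨0, by rw [T.zero_op_s14, T.op_zero_s14]⟩
          · refine ⟨c, ?_⟩
            have hset : {x : X | c ≤ T.op c (if x ∈ A then (1:I) else 0)} = A := by
              ext x
              by_cases hx : x ∈ A
              · simp [hx, T.op_one]
              · simp only [Set.mem_setOf_eq, hx, if_false, T.op_zero_s14, iff_false]
                exact fun h => hc0 (ile_zero h)
            rw [hset, T.comm c (ν A)]
        · rintro y ⟨t, rfl⟩
          rcases eq_or_ne t 0 with rfl | ht0
          · rw [T.op_zero_s14]; exact izero_le _
          rcases le_or_gt t c with htc | hct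
          · have hset : {x : X | t ≤ T.op c (if x ∈ A then (1:I) else 0)} = A := by
              ext x
              by_cases hx : x ∈ A
              · simp [hx, T.op_one, htc]
              · simp only [Set.mem_setOf_eq, hx, if_false, T.op_zero_s14, iff_false]
                exact fun h => ht0 (ile_zero h)
            rw [hset, T.comm c (ν A)]
            exact T.mono (le_refl _) htc
          · have hset : {x : X | t ≤ T.op c (if x ∈ A then (1:I) else 0)} = ∅ := by
              ext x
              simp only [Set.mem_setOf_eq, Set.mem_empty_iff_false, iff_false]
              by_cases hx : x ∈ A
              · rw [if_pos hx, T.op_one]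
                exact fun h => absurd h (not_le.2 hct)
              · rw [if_neg hx, T.op_zero_s14]
                exact fun h => ht0 (ile_zero h)
            rw [hset, hνE, T.zero_op_s14]
            exact izero_le _
      exact (hint _).unique hG
end
end

section
/- Let X be a compact Hausdorff space, ν an upper-semicontinuous normed capacity on X, and ∗ a continuous t-norm. Then for every φ ∈ C(X,[0,1]) the supremum sup{ν(φ⁻¹([t,1])) ∗ t : t ∈ [0,1]} is attained, i.e. the t-normed integral max{ν(φ_t) ∗ t : t ∈ [0,1]} is well defined. -/
open unitInterval

noncomputable section

lemma superLevel_anti {X : Type*} [TopologicalSpace X] (φ : C(X, I)) {s t : I} (h : s ≤ t) :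
    (superLevel φ t).1 ⊆ (superLevel φ s).1 := fun x hx => le_trans h hx

/-- Upper semicontinuity of `t ↦ ν(φ_t) ∗ t`. -/
lemma tnormed_usc {X : Type*} [TopologicalSpace X] [CompactSpace X] [T2Space X]
    (T : Tnorm) (ν : Capacity X) (φ : C(X, I)) (t₀ y : I)
    (h : T.op (ν.ν (superLevel φ t₀)) t₀ < y) :
    ∀ᶠ t in nhds t₀, T.op (ν.ν (superLevel φ t)) t < y := by
  set v := ν.ν (superLevel φ t₀) with hv
  -- Step 1: find `b` with `T.op b t₀ < y` such that eventually `ν(φ_t) ≤ b`.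
  have step1 : ∃ b : I, T.op b t₀ < y ∧ ∀ᶠ t in nhds t₀, ν.ν (superLevel φ t) ≤ b := by
    by_cases hv1 : v = 1
    · exact ⟨v, h, Filter.Eventually.of_forall fun t => hv1 ▸ le_one _⟩
    · have hvlt : v < 1 := lt_of_le_of_ne (le_one _) hv1
      -- find b with v < b and T.op b t₀ < y
      have hcont : Continuous fun x : I => T.op x t₀ :=
        T.cont.comp (continuous_id.prodMk continuous_const)
      have hopen : IsOpen ((fun x : I => T.op x t₀) ⁻¹' Set.Iio y) :=
        isOpen_Iio.preimage hcont
      have hmem : (fun x : I => T.op x t₀) ⁻¹' Set.Iio y ∈ nhds v :=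
        hopen.mem_nhds h
      obtain ⟨u, hvu, hIco⟩ := exists_Ico_subset_of_mem_nhds hmem ⟨1, hvlt⟩
      obtain ⟨b, hvb, hbu⟩ := exists_between hvu
      have hbop : T.op b t₀ < y := hIco ⟨le_of_lt hvb, hbu⟩
      -- capacity upper semicontinuity
      obtain ⟨O, hOopen, hOsub, hOB⟩ := ν.usc (superLevel φ t₀) b hvb
      refine ⟨b, hbop, ?_⟩
      -- eventually φ_t ⊆ O
      have key : ∀ᶠ t in nhds t₀, (superLevel φ t).1 ⊆ O := by
        by_cases ht0 : t₀ = 0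
        · refine Filter.Eventually.of_forall fun t => ?_
          exact fun x hx => hOsub (ht0 ▸ (nonneg t : (0:I) ≤ t).trans hx)
        · have ht0' : 0 < t₀ := lt_of_le_of_ne (nonneg _) (Ne.symm ht0)
          have : Nonempty {s : I // s < t₀} := ⟨⟨0, ht0'⟩⟩
          have hdir : Directed (· ⊇ ·) fun i : {s : I // s < t₀} =>
              (superLevel φ i.1).1 := by
            intro i j
            exact ⟨⟨max i.1 j.1, max_lt i.2 j.2⟩,
              superLevel_anti φ (le_max_left _ _), superLevel_anti φ (le_max_right _ _)⟩
          have hclosed : ∀ i : {s : I // s < t₀}, IsClosed (superLevel φ i.1).1 :=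
            fun i => (superLevel φ i.1).2
          have hinter : (⋂ i : {s : I // s < t₀}, (superLevel φ i.1).1) ⊆ O := by
            intro x hx
            apply hOsub
            show t₀ ≤ φ x
            by_contra hcon
            push_neg at hcon
            obtain ⟨s, hs1, hs2⟩ := exists_between hcon
            exact absurd (Set.mem_iInter.1 hx ⟨s, hs2⟩) (not_le.2 hs1)
          obtain ⟨i, hi⟩ := exists_subset_nhds_of_compactSpace hdir hclosed
            (fun x hx => hOopen.mem_nhds (hinter hx))
          have : Set.Ioi i.1 ∈ nhds t₀ := isOpen_Ioi.mem_nhds i.2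
          filter_upwards [this] with t ht
          exact (superLevel_anti φ (le_of_lt ht)).trans hi
      filter_upwards [key] with t ht
      exact le_of_lt (hOB (superLevel φ t) ((superLevel φ t).2.isCompact) ht)
  obtain ⟨b, hb1, hb2⟩ := step1
  -- Step 2: eventually T.op b t < y
  have hcont2 : Continuous fun t : I => T.op b t :=
    T.cont.comp (continuous_const.prodMk continuous_id)
  have h2 : ∀ᶠ t in nhds t₀, T.op b t < y :=
    (isOpen_Iio.preimage hcont2).mem_nhds hb1
  filter_upwards [hb2, h2] with t h1 h2
  exact lt_of_le_of_lt (T.mono h1 le_rfl) h2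

/-- The supremum defining the t-normed integral is attained: the set
`{ν(φ_t) ∗ t : t ∈ [0,1]}` has a greatest element. -/
theorem tnormed_integral_max_attained {X : Type*} [TopologicalSpace X] [CompactSpace X]
    [T2Space X] (T : Tnorm) (ν : Capacity X) (φ : C(X, I)) :
    ∃ y : I, IsGreatest {y | ∃ t : I, y = T.op (ν.ν (superLevel φ t)) t} y := by
  set g : I → I := fun t => T.op (ν.ν (superLevel φ t)) t with hg
  set G : I → ℝ := fun t => (g t : ℝ) with hG
  have hbdd : BddAbove (Set.range G) := ⟨1, by rintro _ ⟨t, rfl⟩; exact (g t).2.2⟩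
  have hne : (Set.range G).Nonempty := ⟨G 0, 0, rfl⟩
  set s : ℝ := sSup (Set.range G) with hs
  -- usc of g (as open preimages of Iio)
  have husc : ∀ c : I, IsOpen (g ⁻¹' Set.Iio c) := by
    intro c
    rw [isOpen_iff_mem_nhds]
    intro t ht
    exact tnormed_usc T ν φ t c ht
  -- the sup is attained
  have hatt : ∃ t₀ : I, G t₀ = s := by
    by_contra hcon
    push_neg at hcon
    have hlt : ∀ t : I, G t < s :=
      fun t => lt_of_le_of_ne (le_csSup hbdd ⟨t, rfl⟩) (hcon t)
    -- choose intermediate values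
    have hchoice : ∀ t : I, ∃ y : I, g t < y ∧ (y : ℝ) < s := by
      intro t
      obtain ⟨r, hr1, hr2⟩ := exists_between (hlt t)
      have hr0 : (0 : ℝ) ≤ r := le_trans (g t).2.1 (le_of_lt hr1)
      have hr1' : r ≤ 1 := le_trans (le_of_lt hr2) (csSup_le hne (by rintro _ ⟨u, rfl⟩; exact (g u).2.2))
      exact ⟨⟨r, hr0, hr1'⟩, hr1, hr2⟩
    choose y hy1 hy2 using hchoice
    -- open cover
    obtain ⟨F, hF⟩ := isCompact_univ.elim_finite_subcover
      (fun t : I => g ⁻¹' Set.Iio (y t)) (fun t => husc (y t))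
      (fun t _ => Set.mem_iUnion.2 ⟨t, hy1 t⟩)
    have hFne : F.Nonempty := by
      rcases Set.mem_iUnion₂.1 (hF (Set.mem_univ 0)) with ⟨i, hi, _⟩
      exact ⟨i, hi⟩
    set m : ℝ := F.sup' hFne fun i => (y i : ℝ) with hm
    have hms : m < s := (Finset.sup'_lt_iff hFne).2 fun i _ => hy2 i
    have hsm : s ≤ m := by
      apply csSup_le hne
      rintro _ ⟨t, rfl⟩
      rcases Set.mem_iUnion₂.1 (hF (Set.mem_univ t)) with ⟨i, hiF, hti⟩
      exact le_trans (le_of_lt hti) (Finset.le_sup' (fun i => ((y i : ℝ))) hiF)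
    exact absurd (lt_of_le_of_lt hsm hms) (lt_irrefl s)
  obtain ⟨t₀, ht₀⟩ := hatt
  refine ⟨g t₀, ⟨t₀, rfl⟩, ?_⟩
  rintro _ ⟨t, rfl⟩
  have : G t ≤ s := le_csSup hbdd ⟨t, rfl⟩
  rw [← ht₀] at this
  exact Subtype.coe_le_coe.1 this
end
end
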